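/- arXiv:2403.00155 — 6 statements merged into one kernel-verified Lean document; each statement's English description precedes it below -/
import Mathlib

section
/- Let P and Q be probability measures on ℝ^d with finite second moments, mean vectors m_P and m_Q, and second central moments S_P = ∫‖x−m_P‖² dP(x) and S_Q = ∫‖x−m_Q‖² dQ(x). Set a = m_P − m_Q and assume 2(S_P + S_Q) + ‖a‖² > 0. Then the total variation distance satisfies d_TV(P,Q) ≥ ‖a‖² / (2(S_P + S_Q) + ‖a‖²). -/
open MeasureTheory
open scoped RealInnerProductSpace

section Aux

variable {E : Type*} [NormedAddCommGroup E] [InnerProductSpace ℝ E] [CompleteSpace E]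
  [MeasurableSpace E] [OpensMeasurableSpace E]

/-- Second moment about an arbitrary point `c`. -/
lemma aux_second_moment (μ : Measure E) [IsProbabilityMeasure μ]
    (h1 : Integrable (fun x => x) μ) (m c : E) (hm : m = ∫ x, x ∂μ)
    (h2 : Integrable (fun x => ‖x - m‖ ^ 2) μ) :
    Integrable (fun x => ‖x - c‖ ^ 2) μ ∧
      ∫ x, ‖x - c‖ ^ 2 ∂μ = (∫ x, ‖x - m‖ ^ 2 ∂μ) + ‖m - c‖ ^ 2 := by
  have key : ∀ x : E, ‖x - c‖ ^ 2
      = ‖x - m‖ ^ 2 + 2 * ⟪m - c, x - m⟫ + ‖m - c‖ ^ 2 := by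
    intro x
    rw [show x - c = (x - m) + (m - c) by abel, norm_add_sq_real, real_inner_comm]
  have hsub : Integrable (fun x => x - m) μ := h1.sub (integrable_const m)
  have hinner : Integrable (fun x => ⟪m - c, x - m⟫) μ := hsub.const_inner (m - c)
  have hint : Integrable (fun x => ‖x - c‖ ^ 2) μ := by
    have : Integrable (fun x => ‖x - m‖ ^ 2 + 2 * ⟪m - c, x - m⟫ + ‖m - c‖ ^ 2) μ :=
      (h2.add (hinner.const_mul 2)).add (integrable_const _)
    exact this.congr (Filter.Eventually.of_forall fun x => (key x).symm)
  refine ⟨hint, ?_⟩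
  have hzero : ∫ x, x - m ∂μ = 0 := by
    rw [integral_sub h1 (integrable_const m), integral_const, probReal_univ,
      one_smul, hm, sub_self]
  have hinner0 : ∫ x, ⟪m - c, x - m⟫ ∂μ = 0 := by
    rw [integral_inner hsub, hzero, inner_zero_right]
  calc ∫ x, ‖x - c‖ ^ 2 ∂μ
      = ∫ x, ‖x - m‖ ^ 2 + 2 * ⟪m - c, x - m⟫ + ‖m - c‖ ^ 2 ∂μ :=
        integral_congr_ae (Filter.Eventually.of_forall key)
    _ = (∫ x, ‖x - m‖ ^ 2 ∂μ) + ‖m - c‖ ^ 2 := by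
        have e1 := integral_add (μ := μ) (f := fun x => ‖x - m‖ ^ 2 + 2 * ⟪m - c, x - m⟫)
          (g := fun _ => ‖m - c‖ ^ 2) (h2.add (hinner.const_mul 2)) (integrable_const _)
        have e2 := integral_add (μ := μ) (f := fun x => ‖x - m‖ ^ 2)
          (g := fun x => 2 * ⟪m - c, x - m⟫) h2 (hinner.const_mul 2)
        rw [e1, e2, integral_const_mul, hinner0,
          integral_const, probReal_univ, one_smul, mul_zero, add_zero]

/-- AM-GM bound on the norm of a vector integral. -/
lemma aux_norm_integral_le (ν : Measure E) [IsFiniteMeasure ν] (c : E) {t : ℝ} (ht : 0 < t)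
    (hg : Integrable (fun x => x - c) ν) (hg2 : Integrable (fun x => ‖x - c‖ ^ 2) ν) :
    ‖∫ x, x - c ∂ν‖ ≤ t / 2 * (ν Set.univ).toReal + (∫ x, ‖x - c‖ ^ 2 ∂ν) / (2 * t) := by
  calc ‖∫ x, x - c ∂ν‖ ≤ ∫ x, ‖x - c‖ ∂ν := norm_integral_le_integral_norm _
    _ ≤ ∫ x, (t / 2 + ‖x - c‖ ^ 2 / (2 * t)) ∂ν := by
        refine integral_mono hg.norm ((integrable_const _).add (hg2.div_const _)) fun x => ?_
        have h0 : 0 ≤ ‖x - c‖ := norm_nonneg _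
        have hsq : 0 ≤ (t - ‖x - c‖) ^ 2 := sq_nonneg _
        rw [div_add_div _ _ (by norm_num) (by positivity), le_div_iff₀ (by positivity)]
        nlinarith
    _ = t / 2 * (ν Set.univ).toReal + (∫ x, ‖x - c‖ ^ 2 ∂ν) / (2 * t) := by
        rw [integral_add (integrable_const _) (hg2.div_const _), integral_const,
          integral_div, smul_eq_mul, mul_comm]
        rfl

end Aux

/-- Total variation distance between two measures: the supremum over measurable
sets `A` of `|P(A) - Q(A)|`. -/
noncomputable def tvDist {E : Type*} [MeasurableSpace E] (P Q : Measure E) : ℝ :=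
  ⨆ A : {s : Set E // MeasurableSet s}, |(P A.1).toReal - (Q A.1).toReal|

set_option maxHeartbeats 2000000 in
/-- **Lemma 2.6.** For probability measures `P, Q` on `ℝ^d` with finite second
moments, mean vectors `m_P, m_Q` and second central moments `S_P, S_Q`, setting
`a = m_P - m_Q`, the total variation distance satisfies
`d_TV(P,Q) ≥ ‖a‖² / (2(S_P + S_Q) + ‖a‖²)`. -/
theorem tvDist_ge_of_moments {d : ℕ}
    (P Q : Measure (EuclideanSpace ℝ (Fin d)))
    [IsProbabilityMeasure P] [IsProbabilityMeasure Q]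
    (h1P : Integrable (fun x => x) P) (h1Q : Integrable (fun x => x) Q)
    (mP mQ : EuclideanSpace ℝ (Fin d))
    (hmP : mP = ∫ x, x ∂P) (hmQ : mQ = ∫ x, x ∂Q)
    (h2P : Integrable (fun x => ‖x - mP‖ ^ 2) P)
    (h2Q : Integrable (fun x => ‖x - mQ‖ ^ 2) Q)
    (SP SQ : ℝ)
    (hSP : SP = ∫ x, ‖x - mP‖ ^ 2 ∂P)
    (hSQ : SQ = ∫ x, ‖x - mQ‖ ^ 2 ∂Q)
    (a : EuclideanSpace ℝ (Fin d)) (ha : a = mP - mQ)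
    (hpos : 0 < 2 * (SP + SQ) + ‖a‖ ^ 2) :
    ‖a‖ ^ 2 / (2 * (SP + SQ) + ‖a‖ ^ 2) ≤ tvDist P Q := by
  classical
  set c : EuclideanSpace ℝ (Fin d) := (2 : ℝ)⁻¹ • (mP + mQ) with hc
  set K : ℝ := 2 * (SP + SQ) + ‖a‖ ^ 2 with hK
  -- second moments about c
  have hmPc : mP - c = (2 : ℝ)⁻¹ • a := by rw [hc, ha]; module
  have hmQc : mQ - c = -((2 : ℝ)⁻¹ • a) := by rw [hc, ha]; module
  have hP2c := aux_second_moment P h1P mP c hmP h2P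
  have hQ2c := aux_second_moment Q h1Q mQ c hmQ h2Q
  have hnormPc : ‖mP - c‖ ^ 2 = ‖a‖ ^ 2 / 4 := by
    rw [hmPc, norm_smul]; simp [norm_inv]; ring
  have hnormQc : ‖mQ - c‖ ^ 2 = ‖a‖ ^ 2 / 4 := by
    rw [hmQc, norm_neg, norm_smul]; simp [norm_inv]; ring
  have hIP : ∫ x, ‖x - c‖ ^ 2 ∂P = SP + ‖a‖ ^ 2 / 4 := by rw [hP2c.2, ← hSP, hnormPc]
  have hIQ : ∫ x, ‖x - c‖ ^ 2 ∂Q = SQ + ‖a‖ ^ 2 / 4 := by rw [hQ2c.2, ← hSQ, hnormQc]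
  -- Hahn decomposition
  obtain ⟨A, hA, hA1, hA2⟩ := hahn_decomposition (μ := P) (ν := Q)
  have hle1 : Q.restrict A ≤ P.restrict A := by
    rw [Measure.le_iff]
    intro s hs
    rw [Measure.restrict_apply hs, Measure.restrict_apply hs]
    exact hA1 _ (hs.inter hA) Set.inter_subset_right
  have hle2 : P.restrict Aᶜ ≤ Q.restrict Aᶜ := by
    rw [Measure.le_iff]
    intro s hs
    rw [Measure.restrict_apply hs, Measure.restrict_apply hs]
    exact hA2 _ (hs.inter hA.compl) Set.inter_subset_right
  obtain ⟨ν₁, hν₁P, hadd1⟩ : ∃ ν : Measure (EuclideanSpace ℝ (Fin d)),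
      ν ≤ P ∧ ν + Q.restrict A = P.restrict A :=
    ⟨P.restrict A - Q.restrict A, Measure.sub_le.trans Measure.restrict_le_self,
      Measure.sub_add_cancel_of_le hle1⟩
  obtain ⟨ν₂, hν₂Q, hadd2⟩ : ∃ ν : Measure (EuclideanSpace ℝ (Fin d)),
      ν ≤ Q ∧ ν + P.restrict Aᶜ = Q.restrict Aᶜ :=
    ⟨Q.restrict Aᶜ - P.restrict Aᶜ, Measure.sub_le.trans Measure.restrict_le_self,
      Measure.sub_add_cancel_of_le hle2⟩
  haveI : IsFiniteMeasure ν₁ := isFiniteMeasure_of_le P hν₁P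
  haveI : IsFiniteMeasure ν₂ := isFiniteMeasure_of_le Q hν₂Q
  -- masses
  set δ : ℝ := (P A).toReal - (Q A).toReal with hδ
  have hQAle : Q A ≤ P A := hA1 A hA subset_rfl
  have hδ0 : 0 ≤ δ := by
    rw [hδ, sub_nonneg]
    exact ENNReal.toReal_mono (measure_ne_top _ _) hQAle
  have hmass1 : (ν₁ Set.univ).toReal = δ := by
    have h := congrArg (fun μ : Measure (EuclideanSpace ℝ (Fin d)) => (μ Set.univ).toReal) hadd1
    simp only [Measure.add_apply, Measure.restrict_apply_univ,
      ENNReal.toReal_add (measure_ne_top _ _) (measure_ne_top _ _)] at h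
    rw [hδ]; linarith
  have hmass2 : (ν₂ Set.univ).toReal = δ := by
    have h := congrArg (fun μ : Measure (EuclideanSpace ℝ (Fin d)) => (μ Set.univ).toReal) hadd2
    simp only [Measure.add_apply, Measure.restrict_apply_univ,
      ENNReal.toReal_add (measure_ne_top _ _) (measure_ne_top _ _)] at h
    have hPc : (P Aᶜ).toReal = 1 - (P A).toReal := by
      rw [measure_compl hA (measure_ne_top _ _), measure_univ,
        ENNReal.toReal_sub_of_le prob_le_one (by simp), ENNReal.toReal_one]
    have hQc : (Q Aᶜ).toReal = 1 - (Q A).toReal := by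
      rw [measure_compl hA (measure_ne_top _ _), measure_univ,
        ENNReal.toReal_sub_of_le prob_le_one (by simp), ENNReal.toReal_one]
    rw [hδ]; rw [hPc, hQc] at h; linarith
  -- δ ≤ tvDist
  have hbdd : BddAbove (Set.range fun B : {s : Set (EuclideanSpace ℝ (Fin d)) // MeasurableSet s} =>
      |(P B.1).toReal - (Q B.1).toReal|) := by
    refine ⟨1, ?_⟩
    rintro x ⟨B, rfl⟩
    have h1 : (P B.1).toReal ≤ 1 := by
      simpa using ENNReal.toReal_mono (by simp) (prob_le_one (μ := P) (s := B.1))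
    have h2 : (Q B.1).toReal ≤ 1 := by
      simpa using ENNReal.toReal_mono (by simp) (prob_le_one (μ := Q) (s := B.1))
    have h3 : 0 ≤ (P B.1).toReal := ENNReal.toReal_nonneg
    have h4 : 0 ≤ (Q B.1).toReal := ENNReal.toReal_nonneg
    rw [abs_sub_le_iff]; constructor <;> linarith
  have hδtv : δ ≤ tvDist P Q :=
    le_trans (le_abs_self _) (le_ciSup hbdd
      (⟨A, hA⟩ : {s : Set (EuclideanSpace ℝ (Fin d)) // MeasurableSet s}))
  -- integrability
  have hgP : Integrable (fun x => x - c) P := h1P.sub (integrable_const c)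
  have hgQ : Integrable (fun x => x - c) Q := h1Q.sub (integrable_const c)
  have hgν₁ : Integrable (fun x => x - c) ν₁ := hgP.mono_measure hν₁P
  have hgν₂ : Integrable (fun x => x - c) ν₂ := hgQ.mono_measure hν₂Q
  have hg2ν₁ : Integrable (fun x => ‖x - c‖ ^ 2) ν₁ := hP2c.1.mono_measure hν₁P
  have hg2ν₂ : Integrable (fun x => ‖x - c‖ ^ 2) ν₂ := hQ2c.1.mono_measure hν₂Q
  -- a as difference of integrals over ν₁, ν₂
  have ha' : a = (∫ x, x - c ∂ν₁) - ∫ x, x - c ∂ν₂ := by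
    have hintP : ∫ x, x - c ∂P = mP - c := by
      rw [integral_sub h1P (integrable_const c), integral_const, probReal_univ,
        one_smul, ← hmP]
    have hintQ : ∫ x, x - c ∂Q = mQ - c := by
      rw [integral_sub h1Q (integrable_const c), integral_const, probReal_univ,
        one_smul, ← hmQ]
    have hsplitP : ∫ x, x - c ∂P
        = ((∫ x, x - c ∂ν₁) + ∫ x, x - c ∂(Q.restrict A)) + ∫ x, x - c ∂(P.restrict Aᶜ) := by
      have e1 : ∫ x, x - c ∂(ν₁ + Q.restrict A)
          = (∫ x, x - c ∂ν₁) + ∫ x, x - c ∂(Q.restrict A) :=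
        integral_add_measure hgν₁ (hgQ.mono_measure Measure.restrict_le_self)
      have e0 : ∫ x, x - c ∂(P.restrict A + P.restrict Aᶜ)
          = (∫ x, x - c ∂(P.restrict A)) + ∫ x, x - c ∂(P.restrict Aᶜ) :=
        integral_add_measure (hgP.mono_measure Measure.restrict_le_self)
          (hgP.mono_measure Measure.restrict_le_self)
      rw [Measure.restrict_add_restrict_compl hA] at e0
      rw [hadd1] at e1
      rw [← e1]; exact e0
    have hsplitQ : ∫ x, x - c ∂Q
        = (∫ x, x - c ∂(Q.restrict A)) + ((∫ x, x - c ∂ν₂) + ∫ x, x - c ∂(P.restrict Aᶜ)) := by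
      have e1 : ∫ x, x - c ∂(ν₂ + P.restrict Aᶜ)
          = (∫ x, x - c ∂ν₂) + ∫ x, x - c ∂(P.restrict Aᶜ) :=
        integral_add_measure hgν₂ (hgP.mono_measure Measure.restrict_le_self)
      have e0 : ∫ x, x - c ∂(Q.restrict A + Q.restrict Aᶜ)
          = (∫ x, x - c ∂(Q.restrict A)) + ∫ x, x - c ∂(Q.restrict Aᶜ) :=
        integral_add_measure (hgQ.mono_measure Measure.restrict_le_self)
          (hgQ.mono_measure Measure.restrict_le_self)
      rw [Measure.restrict_add_restrict_compl hA] at e0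
      rw [hadd2] at e1
      rw [← e1]; exact e0
    have hdiff : (∫ x, x - c ∂P) - ∫ x, x - c ∂Q
        = (∫ x, x - c ∂ν₁) - ∫ x, x - c ∂ν₂ := by
      rw [hsplitP, hsplitQ]; abel
    rw [← hdiff, hintP, hintQ, ha]; abel
  -- second moments under ν₁, ν₂
  have hm2ν₁ : ∫ x, ‖x - c‖ ^ 2 ∂ν₁ ≤ SP + ‖a‖ ^ 2 / 4 := by
    rw [← hIP]
    exact integral_mono_measure hν₁P (Filter.Eventually.of_forall fun x => by positivity) hP2c.1
  have hm2ν₂ : ∫ x, ‖x - c‖ ^ 2 ∂ν₂ ≤ SQ + ‖a‖ ^ 2 / 4 := by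
    rw [← hIQ]
    exact integral_mono_measure hν₂Q (Filter.Eventually.of_forall fun x => by positivity) hQ2c.1
  -- main inequality: ‖a‖² ≤ K * δ
  have hmain : ‖a‖ ^ 2 ≤ K * δ := by
    rcases eq_or_ne a 0 with h0 | h0
    · rw [h0]; simp only [norm_zero]
      nlinarith [mul_nonneg hpos.le hδ0]
    · have hna : 0 < ‖a‖ := norm_pos_iff.mpr h0
      set t : ℝ := K / (2 * ‖a‖) with htdef
      have ht : 0 < t := by positivity
      have hb1 := aux_norm_integral_le ν₁ c ht hgν₁ hg2ν₁
      have hb2 := aux_norm_integral_le ν₂ c ht hgν₂ hg2ν₂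
      rw [hmass1] at hb1
      rw [hmass2] at hb2
      have hna2 : ‖a‖ ≤ ‖∫ x, x - c ∂ν₁‖ + ‖∫ x, x - c ∂ν₂‖ := by
        rw [ha']; exact norm_sub_le _ _
      have hsum : (∫ x, ‖x - c‖ ^ 2 ∂ν₁) + ∫ x, ‖x - c‖ ^ 2 ∂ν₂ ≤ K / 2 := by
        rw [hK]; linarith
      have hdiv : ((∫ x, ‖x - c‖ ^ 2 ∂ν₁) + ∫ x, ‖x - c‖ ^ 2 ∂ν₂) / (2 * t)
          ≤ (K / 2) / (2 * t) := by gcongr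
      have hbound : ‖a‖ ≤ t * δ + K / 2 / (2 * t) := by
        calc ‖a‖ ≤ ‖∫ x, x - c ∂ν₁‖ + ‖∫ x, x - c ∂ν₂‖ := hna2
          _ ≤ (t / 2 * δ + (∫ x, ‖x - c‖ ^ 2 ∂ν₁) / (2 * t))
              + (t / 2 * δ + (∫ x, ‖x - c‖ ^ 2 ∂ν₂) / (2 * t)) := add_le_add hb1 hb2
          _ = t * δ + ((∫ x, ‖x - c‖ ^ 2 ∂ν₁) / (2 * t)
              + (∫ x, ‖x - c‖ ^ 2 ∂ν₂) / (2 * t)) := by ring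
          _ = t * δ + ((∫ x, ‖x - c‖ ^ 2 ∂ν₁) + ∫ x, ‖x - c‖ ^ 2 ∂ν₂) / (2 * t) := by
              rw [← add_div]
          _ ≤ t * δ + K / 2 / (2 * t) := by linarith [hdiv]
      have h2t : K / 2 / (2 * t) = ‖a‖ / 2 := by
        rw [htdef]; field_simp; try ring
      rw [h2t] at hbound
      have hhalf : ‖a‖ / 2 ≤ t * δ := by linarith
      have h1 := mul_le_mul_of_nonneg_right hhalf (by positivity : (0:ℝ) ≤ 2 * ‖a‖)
      have h2 : ‖a‖ / 2 * (2 * ‖a‖) = ‖a‖ ^ 2 := by ring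
      have h3 : t * δ * (2 * ‖a‖) = K * δ := by
        rw [htdef]; field_simp; try ring
      rw [h2, h3] at h1
      exact h1
  rw [div_le_iff₀ hpos]
  calc ‖a‖ ^ 2 ≤ K * δ := hmain
    _ = δ * K := mul_comm _ _
    _ ≤ tvDist P Q * K := by
        have hKpos : 0 < K := hpos
        exact mul_le_mul_of_nonneg_right hδtv hKpos.le
end

section
/- Let P and Q be probability measures on ℝ^d with finite second moments, mean vectors m_P and m_Q, and second central moments S_P = ∫‖x−m_P‖² dP(x) and S_Q = ∫‖x−m_Q‖² dQ(x). Set a = m_P − m_Q and assume 2(S_P + S_Q) + ‖a‖² > 0. Then the Kullback–Leibler divergence satisfies KL(P‖Q) ≥ 2 · ( ‖a‖² / (2(S_P + S_Q) + ‖a‖²) )². -/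
open MeasureTheory Classical

section Auxiliary
open Real Set RealInnerProductSpace

variable {α : Type*} [MeasurableSpace α] {μ : Measure α}

lemma integrable_mul_of_sq {u v : α → ℝ} (hu : AEStronglyMeasurable u μ)
    (hv : AEStronglyMeasurable v μ)
    (hu2 : Integrable (fun x => u x ^ 2) μ) (hv2 : Integrable (fun x => v x ^ 2) μ) :
    Integrable (fun x => u x * v x) μ := by
  have hg : Integrable (fun x => (1/2) * (u x ^ 2 + v x ^ 2)) μ := (hu2.add hv2).const_mul (1/2)
  refine Integrable.mono' hg (hu.mul hv) ?_
  filter_upwards with x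
  rw [Real.norm_eq_abs, abs_mul]
  nlinarith [sq_nonneg (|u x| - |v x|), sq_abs (u x), sq_abs (v x), abs_nonneg (u x), abs_nonneg (v x)]

lemma sq_integral_mul_le {u v : α → ℝ} (hu : AEStronglyMeasurable u μ)
    (hv : AEStronglyMeasurable v μ)
    (hu2 : Integrable (fun x => u x ^ 2) μ) (hv2 : Integrable (fun x => v x ^ 2) μ) :
    (∫ x, u x * v x ∂μ) ^ 2 ≤ (∫ x, u x ^ 2 ∂μ) * ∫ x, v x ^ 2 ∂μ := by
  have huv := integrable_mul_of_sq hu hv hu2 hv2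
  have key : ∀ l : ℝ, 0 ≤ (∫ x, v x ^ 2 ∂μ) * (l * l)
      + (2 * ∫ x, u x * v x ∂μ) * l + ∫ x, u x ^ 2 ∂μ := by
    intro l
    have h1 : Integrable (fun x => (u x + l * v x) ^ 2) μ := by
      have : (fun x => (u x + l * v x) ^ 2)
          = fun x => u x ^ 2 + (2 * l) * (u x * v x) + l ^ 2 * v x ^ 2 := by
        funext x; ring
      rw [this]
      exact (hu2.add (huv.const_mul _)).add (hv2.const_mul _)
    have h2 : 0 ≤ ∫ x, (u x + l * v x) ^ 2 ∂μ :=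
      integral_nonneg fun x => sq_nonneg _
    have ia : Integrable (fun x => (2 * l) * (u x * v x)) μ := huv.const_mul _
    have ib : Integrable (fun x => l ^ 2 * v x ^ 2) μ := hv2.const_mul _
    have iab : Integrable (fun x => (2 * l) * (u x * v x) + l ^ 2 * v x ^ 2) μ := ia.add ib
    have h3 : ∫ x, (u x + l * v x) ^ 2 ∂μ
        = ∫ x, u x ^ 2 ∂μ + (2 * l) * (∫ x, u x * v x ∂μ) + l ^ 2 * ∫ x, v x ^ 2 ∂μ := by
      rw [show (fun x => (u x + l * v x) ^ 2)
          = fun x => u x ^ 2 + ((2 * l) * (u x * v x) + l ^ 2 * v x ^ 2) by funext x; ring,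
        integral_add hu2 iab, integral_add ia ib, integral_const_mul, integral_const_mul]
      ring
    nlinarith [h2, h3]
  have := discrim_le_zero key
  rw [discrim] at this
  nlinarith [this]

lemma abs_integral_mul_le {u v : α → ℝ} (hu : AEStronglyMeasurable u μ)
    (hv : AEStronglyMeasurable v μ)
    (hu2 : Integrable (fun x => u x ^ 2) μ) (hv2 : Integrable (fun x => v x ^ 2) μ) :
    |∫ x, u x * v x ∂μ| ≤ Real.sqrt (∫ x, u x ^ 2 ∂μ) * Real.sqrt (∫ x, v x ^ 2 ∂μ) := by
  have h := sq_integral_mul_le hu hv hu2 hv2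
  have h1 : 0 ≤ ∫ x, u x ^ 2 ∂μ := integral_nonneg fun x => sq_nonneg _
  have h2 : 0 ≤ ∫ x, v x ^ 2 ∂μ := integral_nonneg fun x => sq_nonneg _
  rw [← Real.sqrt_mul h1]
  rw [← Real.sqrt_sq_eq_abs]
  exact Real.sqrt_le_sqrt h


private noncomputable def Ffun (y : ℝ) : ℝ := y * log y - y + 1 - 3/2 * ((y-1)^2/(y+2))
private noncomputable def Gfun (y : ℝ) : ℝ :=
  log y - 3/2 * ((2*(y-1)*(y+2) - (y-1)^2 * 1)/((y+2)^2))

private lemma hFderiv {y : ℝ} (hy : 0 < y) : HasDerivAt Ffun (Gfun y) y := by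
  have hne : y + 2 ≠ 0 := by linarith
  have h1 : HasDerivAt (fun x : ℝ => x * log x) (log y + 1) y := hasDerivAt_mul_log hy.ne'
  have hnum : HasDerivAt (fun x : ℝ => (x-1)^2) (2*(y-1)) y := by
    simpa using (((hasDerivAt_id y).sub_const 1).fun_pow 2)
  have hden : HasDerivAt (fun x : ℝ => x + 2) 1 y := (hasDerivAt_id y).add_const 2
  have hdiv : HasDerivAt (fun x : ℝ => (x-1)^2/(x+2))
      ((2*(y-1)*(y+2) - (y-1)^2 * 1)/((y+2)^2)) y := hnum.div hden hne
  have := ((h1.sub (hasDerivAt_id y)).add_const 1).sub (hdiv.const_mul (3/2))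
  exact this.congr_deriv (by unfold Gfun; ring)

private lemma hGderiv {y : ℝ} (hy : 0 < y) :
    HasDerivAt Gfun (1/y - 27/((y+2)^3)) y := by
  have hne : y + 2 ≠ 0 := by linarith
  have hne2 : (y + 2)^2 ≠ 0 := pow_ne_zero _ hne
  have hlog : HasDerivAt log (1/y) y := by
    simpa [one_div] using Real.hasDerivAt_log hy.ne'
  have hnum : HasDerivAt (fun x : ℝ => 2*(x-1)*(x+2) - (x-1)^2 * 1) (2*y + 4) y := by
    have e : (fun x : ℝ => 2*(x-1)*(x+2) - (x-1)^2 * 1) = fun x : ℝ => x^2 + 4*x - 5 := by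
      funext x; ring
    rw [e]
    have := (((hasDerivAt_pow 2 y)).add ((hasDerivAt_id y).const_mul 4)).sub_const 5
    exact this.congr_deriv (by norm_num)
  have hden : HasDerivAt (fun x : ℝ => (x+2)^2) (2*(y+2)) y := by
    simpa using ((hasDerivAt_id y).add_const 2).fun_pow 2
  have hdiv := hnum.div hden hne2
  have := hlog.sub (hdiv.const_mul (3/2))
  exact this.congr_deriv (by field_simp; ring)

private lemma Gfun_one : Gfun 1 = 0 := by
  unfold Gfun; simp [Real.log_one]

private lemma Ffun_one : Ffun 1 = 0 := by
  unfold Ffun; simp [Real.log_one]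

private lemma Gfun_nonneg_of_one_le {y : ℝ} (hy : 1 ≤ y) : 0 ≤ Gfun y := by
  have hmono : MonotoneOn Gfun (Ioi (0:ℝ)) := by
    have hdiff : DifferentiableOn ℝ Gfun (Ioi (0:ℝ)) :=
      fun x hx => (hGderiv (mem_Ioi.mp hx)).differentiableAt.differentiableWithinAt
    refine monotoneOn_of_deriv_nonneg (convex_Ioi 0) hdiff.continuousOn ?_ ?_
    · rw [interior_Ioi]; exact hdiff
    · intro x hx
      rw [interior_Ioi] at hx
      have hx0 : (0:ℝ) < x := hx
      rw [(hGderiv hx0).deriv]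
      rw [sub_nonneg, div_le_div_iff₀ (by positivity) hx0]
      nlinarith [sq_nonneg (x - 1), hx0.le]
  have := hmono (mem_Ioi.mpr one_pos) (mem_Ioi.mpr (lt_of_lt_of_le one_pos hy)) hy
  rwa [Gfun_one] at this

private lemma Gfun_nonpos_of_le_one {y : ℝ} (hy0 : 0 < y) (hy : y ≤ 1) : Gfun y ≤ 0 := by
  have hmono : MonotoneOn Gfun (Ioi (0:ℝ)) := by
    have hdiff : DifferentiableOn ℝ Gfun (Ioi (0:ℝ)) :=
      fun x hx => (hGderiv (mem_Ioi.mp hx)).differentiableAt.differentiableWithinAt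
    refine monotoneOn_of_deriv_nonneg (convex_Ioi 0) hdiff.continuousOn ?_ ?_
    · rw [interior_Ioi]; exact hdiff
    · intro x hx
      rw [interior_Ioi] at hx
      have hx0 : (0:ℝ) < x := hx
      rw [(hGderiv hx0).deriv]
      rw [sub_nonneg, div_le_div_iff₀ (by positivity) hx0]
      nlinarith [sq_nonneg (x - 1), hx0.le]
  have := hmono (mem_Ioi.mpr hy0) (mem_Ioi.mpr one_pos) hy
  rwa [Gfun_one] at this

private lemma Ffun_nonneg {y : ℝ} (hy : 0 ≤ y) : 0 ≤ Ffun y := by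
  rcases eq_or_lt_of_le hy with h0 | h0
  · rw [← h0]; unfold Ffun; simp [Real.log_zero]; norm_num
  rcases le_or_gt 1 y with h1 | h1
  · -- monotone on [1, ∞)
    have hdiff : DifferentiableOn ℝ Ffun (Ici (1:ℝ)) := fun x hx =>
      (hFderiv (lt_of_lt_of_le one_pos (mem_Ici.mp hx))).differentiableAt.differentiableWithinAt
    have hmono : MonotoneOn Ffun (Ici (1:ℝ)) := by
      refine monotoneOn_of_deriv_nonneg (convex_Ici 1) hdiff.continuousOn ?_ ?_
      · rw [interior_Ici]
        exact fun x hx => (hFderiv (lt_trans one_pos hx)).differentiableAt.differentiableWithinAt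
      · intro x hx
        rw [interior_Ici] at hx
        rw [(hFderiv (lt_trans one_pos hx)).deriv]
        exact Gfun_nonneg_of_one_le (le_of_lt hx)
    have := hmono (mem_Ici.mpr le_rfl) (mem_Ici.mpr h1) h1
    rwa [Ffun_one] at this
  · -- antitone on (0, 1]
    have hdiff : DifferentiableOn ℝ Ffun (Ioc (0:ℝ) 1) := fun x hx =>
      (hFderiv hx.1).differentiableAt.differentiableWithinAt
    have hanti : AntitoneOn Ffun (Ioc (0:ℝ) 1) := by
      refine antitoneOn_of_deriv_nonpos (convex_Ioc 0 1) hdiff.continuousOn ?_ ?_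
      · rw [interior_Ioc]
        exact fun x hx => (hFderiv hx.1).differentiableAt.differentiableWithinAt
      · intro x hx
        rw [interior_Ioc] at hx
        rw [(hFderiv hx.1).deriv]
        exact Gfun_nonpos_of_le_one hx.1 hx.2.le
    have := hanti (mem_Ioc.mpr ⟨h0, h1.le⟩) (mem_Ioc.mpr ⟨one_pos, le_rfl⟩) h1.le
    rwa [Ffun_one] at this

lemma key_pointwise {y : ℝ} (hy : 0 ≤ y) :
    3/2 * ((y-1)^2/(y+2)) ≤ y * Real.log y - y + 1 := by
  have := Ffun_nonneg hy
  unfold Ffun at this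
  linarith


variable {α : Type*} [MeasurableSpace α] {P Q : Measure α}



lemma pinsker_aux [IsProbabilityMeasure P] [IsProbabilityMeasure Q]
    (hPQ : P ≪ Q) (hint : Integrable (llr P Q) P) :
    2 * (∫ x, max ((P.rnDeriv Q x).toReal - 1) 0 ∂Q) ^ 2 ≤ ∫ x, llr P Q x ∂P := by
  set g : α → ℝ := fun x => (P.rnDeriv Q x).toReal with hg_def
  show 2 * (∫ x, max (g x - 1) 0 ∂Q) ^ 2 ≤ ∫ x, llr P Q x ∂P
  have hgm : Measurable g := (Measure.measurable_rnDeriv P Q).ennreal_toReal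
  have hg0 : ∀ x, 0 ≤ g x := fun x => ENNReal.toReal_nonneg
  have hgi : Integrable g Q := Measure.integrable_toReal_rnDeriv
  have hg1 : ∫ x, g x ∂Q = 1 := by
    rw [hg_def, Measure.integral_toReal_rnDeriv hPQ]; simp
  -- KL as integral over Q
  have hKL : ∫ x, llr P Q x ∂P = ∫ x, g x * Real.log (g x) ∂Q := by
    rw [← integral_rnDeriv_smul hPQ (f := llr P Q)]
    rfl
  have hglogg_int : Integrable (fun x => g x * Real.log (g x)) Q := by
    have := (integrable_rnDeriv_smul_iff hPQ (f := llr P Q)).mpr hint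
    exact this
  -- ψ
  set ψ : α → ℝ := fun x => (g x - 1)^2 / (g x + 2) with hψ_def
  have hψm : Measurable ψ := (((hgm.sub measurable_const).pow measurable_const).div
    (hgm.add measurable_const))
  have hψ0 : ∀ x, 0 ≤ ψ x := fun x => div_nonneg (sq_nonneg _) (by linarith [hg0 x])
  have hψ_le : ∀ x, ψ x ≤ g x + 1 := by
    intro x
    rw [hψ_def, div_le_iff₀ (by linarith [hg0 x] : (0:ℝ) < g x + 2)]
    nlinarith [hg0 x]
  have hψ_int : Integrable ψ Q := by
    refine Integrable.mono' (hgi.add (integrable_const 1)) hψm.aestronglyMeasurable ?_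
    filter_upwards with x
    rw [Real.norm_of_nonneg (hψ0 x)]
    exact hψ_le x
  -- step 2 : (3/2) ∫ψ ≤ KL
  have hphi_int : Integrable (fun x => g x * Real.log (g x) - g x + 1) Q :=
    (hglogg_int.sub hgi).add (integrable_const 1)
  have step2 : 3/2 * ∫ x, ψ x ∂Q ≤ ∫ x, llr P Q x ∂P := by
    have h1 : ∫ x, (3/2 : ℝ) * ψ x ∂Q ≤ ∫ x, (g x * Real.log (g x) - g x + 1) ∂Q := by
      refine integral_mono (hψ_int.const_mul _) hphi_int fun x => ?_
      exact key_pointwise (hg0 x)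
    rw [integral_const_mul] at h1
    have hsubi : Integrable (fun x => g x * Real.log (g x) - g x) Q := hglogg_int.sub hgi
    rw [integral_add hsubi (integrable_const 1),
      integral_sub hglogg_int hgi, hg1, integral_const] at h1
    simp at h1
    rw [hKL]
    linarith
  -- step 3 : (∫|g-1|)² ≤ 3 ∫ψ
  have habs_int : Integrable (fun x => |g x - 1|) Q := (hgi.sub (integrable_const 1)).abs
  have step3 : (∫ x, |g x - 1| ∂Q) ^ 2 ≤ 3 * ∫ x, ψ x ∂Q := by
    set u : α → ℝ := fun x => |g x - 1| / Real.sqrt (g x + 2) with hu_def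
    set v : α → ℝ := fun x => Real.sqrt (g x + 2) with hv_def
    have hsqrt_pos : ∀ x, 0 < Real.sqrt (g x + 2) :=
      fun x => Real.sqrt_pos.mpr (by linarith [hg0 x])
    have huv : ∀ x, u x * v x = |g x - 1| := by
      intro x
      rw [hu_def, hv_def]
      field_simp
      exact mul_div_cancel_right₀ _ (hsqrt_pos x).ne'
    have hu2 : ∀ x, u x ^ 2 = ψ x := by
      intro x
      rw [hu_def, hψ_def]
      rw [div_pow, sq_abs, Real.sq_sqrt (by linarith [hg0 x])]
    have hv2 : ∀ x, v x ^ 2 = g x + 2 := fun x => Real.sq_sqrt (by linarith [hg0 x])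
    have hum : Measurable u := ((hgm.sub measurable_const).abs).div
      ((hgm.add measurable_const).sqrt)
    have hvm : Measurable v := (hgm.add measurable_const).sqrt
    have hu2i : Integrable (fun x => u x ^ 2) Q := by
      simp_rw [hu2]; exact hψ_int
    have hv2i : Integrable (fun x => v x ^ 2) Q := by
      simp_rw [hv2]; exact hgi.add (integrable_const 2)
    have := sq_integral_mul_le hum.aestronglyMeasurable hvm.aestronglyMeasurable hu2i hv2i
    simp_rw [huv, hu2, hv2] at this
    rw [integral_add hgi (integrable_const 2), hg1, integral_const] at this
    simp at this
    linarith [this]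
  -- step 4 : ∫|g-1| = 2 t
  have hmax_int : Integrable (fun x => max (g x - 1) 0) Q := by
    refine Integrable.mono' habs_int ((hgm.sub measurable_const).max measurable_const).aestronglyMeasurable ?_
    filter_upwards with x
    rw [Real.norm_of_nonneg (le_max_right _ _)]
    rcases le_total (g x - 1) 0 with h | h
    · simp [max_eq_right h, abs_nonneg]
    · rw [max_eq_left h]; exact le_abs_self _
  have step4 : ∫ x, |g x - 1| ∂Q = 2 * ∫ x, max (g x - 1) 0 ∂Q := by
    have hpt : ∀ x, |g x - 1| = 2 * max (g x - 1) 0 - (g x - 1) := by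
      intro x
      rcases le_total (g x - 1) 0 with h | h
      · rw [max_eq_right h, abs_of_nonpos h]; ring
      · rw [max_eq_left h, abs_of_nonneg h]; ring
    simp_rw [hpt]
    have hgsub : Integrable (fun x => g x - 1) Q := hgi.sub (integrable_const 1)
    have hmax2 : Integrable (fun x => 2 * max (g x - 1) 0) Q := hmax_int.const_mul 2
    rw [integral_sub hmax2 hgsub, integral_sub hgi (integrable_const 1), hg1,
      integral_const, integral_const_mul]
    simp
  rw [step4] at step3
  have hψint_nonneg : 0 ≤ ∫ x, ψ x ∂Q := integral_nonneg fun x => hψ0 x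
  nlinarith [step2, step3, hψint_nonneg]




set_option maxHeartbeats 2000000 in
lemma mean_sep_aux {d : ℕ}
    (P Q : Measure (EuclideanSpace ℝ (Fin d)))
    [IsProbabilityMeasure P] [IsProbabilityMeasure Q]
    (hPQ : P ≪ Q)
    (h1P : Integrable (fun x => x) P) (h1Q : Integrable (fun x => x) Q)
    (mP mQ : EuclideanSpace ℝ (Fin d))
    (hmP : mP = ∫ x, x ∂P) (hmQ : mQ = ∫ x, x ∂Q)
    (h2P : Integrable (fun x => ‖x - mP‖ ^ 2) P)
    (h2Q : Integrable (fun x => ‖x - mQ‖ ^ 2) Q)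
    (SP SQ : ℝ)
    (hSP : SP = ∫ x, ‖x - mP‖ ^ 2 ∂P)
    (hSQ : SQ = ∫ x, ‖x - mQ‖ ^ 2 ∂Q)
    (a : EuclideanSpace ℝ (Fin d)) (ha : a = mP - mQ) :
    ‖a‖ ^ 2 * ‖a‖ ^ 2 ≤ (∫ x, max ((P.rnDeriv Q x).toReal - 1) 0 ∂Q)
      * (‖a‖ ^ 2 * (2 * (SP + SQ) + ‖a‖ ^ 2)) := by
  set n : ℝ := ‖a‖ with hn_def
  have hn0 : 0 ≤ n := norm_nonneg a
  set g : EuclideanSpace ℝ (Fin d) → ℝ := fun x => (P.rnDeriv Q x).toReal with hg_def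
  show n ^ 2 * n ^ 2 ≤ (∫ x, max (g x - 1) 0 ∂Q) * (n ^ 2 * (2 * (SP + SQ) + n ^ 2))
  have hgm : Measurable g := (Measure.measurable_rnDeriv P Q).ennreal_toReal
  have hg0 : ∀ x, 0 ≤ g x := fun x => ENNReal.toReal_nonneg
  have hgi : Integrable g Q := Measure.integrable_toReal_rnDeriv
  have hg1 : ∫ x, g x ∂Q = 1 := by
    rw [hg_def, Measure.integral_toReal_rnDeriv hPQ]; simp
  -- the linear functional
  set L : EuclideanSpace ℝ (Fin d) →L[ℝ] ℝ := innerSL ℝ a with hL_def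
  set c : ℝ := (⟪a, mP⟫ + ⟪a, mQ⟫) / 2 with hc_def
  set f : EuclideanSpace ℝ (Fin d) → ℝ := fun x => ⟪a, x⟫ - c with hf_def
  have hL_apply : ∀ x : EuclideanSpace ℝ (Fin d), L x = ⟪a, x⟫ := fun x => rfl
  have hf_cont : Continuous f := (continuous_const.inner continuous_id).sub continuous_const
  have haa : ⟪a, a⟫ = n ^ 2 := real_inner_self_eq_norm_sq a
  have hamPQ : ⟪a, mP⟫ - ⟪a, mQ⟫ = n ^ 2 := by
    rw [← inner_sub_right, ← ha, haa]
  -- means of f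
  have hmean : ∀ (R : Measure (EuclideanSpace ℝ (Fin d))) (mR : EuclideanSpace ℝ (Fin d)), IsProbabilityMeasure R →
      Integrable (fun x => x) R → mR = ∫ x, x ∂ R → ∫ x, f x ∂ R = ⟪a, mR⟫ - c := by
    intro R mR hR h1R hmR
    have hinner_int : Integrable (fun x => ⟪a, x⟫) R := by
      have := L.integrable_comp h1R
      simpa [hL_apply] using this
    rw [hf_def]
    rw [integral_sub hinner_int (integrable_const c), integral_const]
    have : ∫ x, ⟪a, x⟫ ∂ R = ⟪a, mR⟫ := by
      have := L.integral_comp_comm h1R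
      rw [hmR]
      simpa [hL_apply] using this
    rw [this]
    simp [measure_univ]
  have hfP_mean : ∫ x, f x ∂P = ⟪a, mP⟫ - c := hmean P mP inferInstance h1P hmP
  have hfQ_mean : ∫ x, f x ∂Q = ⟪a, mQ⟫ - c := hmean Q mQ inferInstance h1Q hmQ
  -- second moments of f
  have hsq : ∀ (R : Measure (EuclideanSpace ℝ (Fin d))) (mR : EuclideanSpace ℝ (Fin d)) (SR : ℝ), IsProbabilityMeasure R →
      Integrable (fun x => x) R → mR = ∫ x, x ∂ R → Integrable (fun x => ‖x - mR‖ ^ 2) R →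
      SR = ∫ x, ‖x - mR‖ ^ 2 ∂ R →
      Integrable (fun x => f x ^ 2) R ∧ ∫ x, f x ^ 2 ∂ R ≤ n ^ 2 * SR + (⟪a, mR⟫ - c) ^ 2 := by
    intro R mR SR hR h1R hmR h2R hSR
    set δ : ℝ := ⟪a, mR⟫ - c with hδ_def
    set φ : EuclideanSpace ℝ (Fin d) → ℝ := fun x => ⟪a, x - mR⟫ with hφ_def
    have hφ_cont : Continuous φ := continuous_const.inner (continuous_id.sub continuous_const)
    have hf_eq : ∀ x, f x = φ x + δ := by
      intro x
      simp only [hφ_def, hf_def, hδ_def, inner_sub_right]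
      ring
    have hφ_bound : ∀ x, φ x ^ 2 ≤ n ^ 2 * ‖x - mR‖ ^ 2 := by
      intro x
      have h := abs_real_inner_le_norm a (x - mR)
      have h2 : |φ x| ^ 2 ≤ (n * ‖x - mR‖) ^ 2 := by
        apply pow_le_pow_left₀ (abs_nonneg _) h
      rw [sq_abs] at h2
      nlinarith [h2]
    have hφ2_int : Integrable (fun x => φ x ^ 2) R := by
      refine Integrable.mono' (h2R.const_mul (n ^ 2)) ((hφ_cont.pow 2).aestronglyMeasurable) ?_
      filter_upwards with x
      rw [Real.norm_of_nonneg (sq_nonneg _)]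
      exact hφ_bound x
    have hφ_int : Integrable φ R := by
      have := L.integrable_comp (h1R.sub (integrable_const mR))
      simpa [hL_apply, hφ_def] using this
    have hφ_mean : ∫ x, φ x ∂ R = 0 := by
      have hsub : Integrable (fun x : EuclideanSpace ℝ (Fin d) => x - mR) R := h1R.sub (integrable_const mR)
      have h := L.integral_comp_comm hsub
      have hzero : ∫ x : EuclideanSpace ℝ (Fin d), (x - mR) ∂ R = 0 := by
        rw [integral_sub h1R (integrable_const mR), integral_const]
        simp [measure_univ, hmR]
      rw [hφ_def]
      calc ∫ x, ⟪a, x - mR⟫ ∂ R = L (∫ x : EuclideanSpace ℝ (Fin d), (x - mR) ∂ R) := by simpa [hL_apply] using h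
        _ = 0 := by rw [hzero]; simp
    have hf2_int : Integrable (fun x => f x ^ 2) R := by
      have : (fun x => f x ^ 2) = fun x => φ x ^ 2 + (2 * δ * φ x + δ ^ 2) := by
        funext x; rw [hf_eq x]; ring
      rw [this]
      exact hφ2_int.add ((hφ_int.const_mul _).add (integrable_const _))
    refine ⟨hf2_int, ?_⟩
    have hexp : ∫ x, f x ^ 2 ∂ R = ∫ x, φ x ^ 2 ∂ R + δ ^ 2 := by
      have he : (fun x => f x ^ 2) = fun x => φ x ^ 2 + (2 * δ * φ x + δ ^ 2) := by
        funext x; rw [hf_eq x]; ring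
      have hi1 : Integrable (fun x => 2 * δ * φ x) R := hφ_int.const_mul _
      have hi2 : Integrable (fun x => 2 * δ * φ x + δ ^ 2) R := hi1.add (integrable_const _)
      rw [he, integral_add hφ2_int hi2, integral_add hi1 (integrable_const _),
        integral_const_mul, hφ_mean, integral_const]
      simp [measure_univ]
    rw [hexp, hSR]
    have : ∫ x, φ x ^ 2 ∂ R ≤ n ^ 2 * ∫ x, ‖x - mR‖ ^ 2 ∂ R := by
      rw [← integral_const_mul]
      exact integral_mono hφ2_int (h2R.const_mul _) hφ_bound
    nlinarith [this]
  obtain ⟨hf2P_int, hAP⟩ := hsq P mP SP inferInstance h1P hmP h2P hSP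
  obtain ⟨hf2Q_int, hAQ⟩ := hsq Q mQ SQ inferInstance h1Q hmQ h2Q hSQ
  set AP : ℝ := ∫ x, f x ^ 2 ∂P with hAP_def
  set AQ : ℝ := ∫ x, f x ^ 2 ∂Q with hAQ_def
  have hAP0 : 0 ≤ AP := integral_nonneg fun x => sq_nonneg _
  have hAQ0 : 0 ≤ AQ := integral_nonneg fun x => sq_nonneg _
  have hδP : ⟪a, mP⟫ - c = n ^ 2 / 2 := by rw [hc_def]; linarith [hamPQ]
  have hδQ : ⟪a, mQ⟫ - c = -(n ^ 2) / 2 := by rw [hc_def]; linarith [hamPQ]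
  rw [hδP] at hAP
  rw [hδQ] at hAQ
  -- positive and negative parts
  set p : EuclideanSpace ℝ (Fin d) → ℝ := fun x => max (g x - 1) 0 with hp_def
  set m : EuclideanSpace ℝ (Fin d) → ℝ := fun x => max (1 - g x) 0 with hm_def
  have hpm : Measurable p := (hgm.sub measurable_const).max measurable_const
  have hmm : Measurable m := (measurable_const.sub hgm).max measurable_const
  have hp0 : ∀ x, 0 ≤ p x := fun x => le_max_right _ _
  have hm0 : ∀ x, 0 ≤ m x := fun x => le_max_right _ _
  have hp_le_g : ∀ x, p x ≤ g x := by
    intro x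
    have := hg0 x
    simp only [hp_def]
    rcases le_total (g x - 1) 0 with h | h
    · rw [max_eq_right h]; linarith
    · rw [max_eq_left h]; linarith
  have hm_le_one : ∀ x, m x ≤ 1 := by
    intro x
    simp only [hm_def]
    rcases le_total (1 - g x) 0 with h | h
    · rw [max_eq_right h]; linarith
    · rw [max_eq_left h]; linarith [hg0 x]
  have hpm_eq : ∀ x, p x - m x = g x - 1 := by
    intro x
    simp only [hp_def, hm_def]
    rcases le_total (g x - 1) 0 with h | h
    · rw [max_eq_right h, max_eq_left (by linarith)]; ring
    · rw [max_eq_left h, max_eq_right (by linarith)]; ring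
  have hp_int : Integrable p Q := by
    refine Integrable.mono' hgi hpm.aestronglyMeasurable ?_
    filter_upwards with x
    rw [Real.norm_of_nonneg (hp0 x)]
    exact hp_le_g x
  have hm_int : Integrable m Q := by
    refine Integrable.mono' (integrable_const 1) hmm.aestronglyMeasurable ?_
    filter_upwards with x
    rw [Real.norm_of_nonneg (hm0 x)]
    exact hm_le_one x
  set t : ℝ := ∫ x, p x ∂Q with ht_def
  have ht0 : 0 ≤ t := integral_nonneg fun x => hp0 x
  have htm : ∫ x, m x ∂Q = t := by
    have h : ∫ x, (p x - m x) ∂Q = 0 := by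
      have : (fun x => p x - m x) = fun x => g x - 1 := funext hpm_eq
      rw [this, integral_sub hgi (integrable_const 1), hg1, integral_const]
      simp [measure_univ]
    rw [integral_sub hp_int hm_int] at h
    linarith
  -- change of measure for f and f^2
  have hf_int_P : Integrable f P := by
    have := L.integrable_comp h1P
    exact (by simpa [hL_apply] using this : Integrable (fun x => ⟪a, x⟫) P).sub (integrable_const c)
  have hf_int_Q : Integrable f Q := by
    have := L.integrable_comp h1Q
    exact (by simpa [hL_apply] using this : Integrable (fun x => ⟪a, x⟫) Q).sub (integrable_const c)
  haveI : P.HaveLebesgueDecomposition Q := Measure.haveLebesgueDecomposition_of_sigmaFinite P Q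
  have hgf_eq : ∫ x, g x * f x ∂Q = ∫ x, f x ∂P := by
    rw [← integral_rnDeriv_smul hPQ (f := f)]
    rfl
  have hgf2_eq : ∫ x, g x * f x ^ 2 ∂Q = AP := by
    rw [hAP_def, ← integral_rnDeriv_smul hPQ (f := fun x => f x ^ 2)]
    rfl
  have hgf_int : Integrable (fun x => g x * f x) Q :=
    (integrable_rnDeriv_smul_iff hPQ (f := f)).mpr hf_int_P
  have hgf2_int : Integrable (fun x => g x * f x ^ 2) Q :=
    (integrable_rnDeriv_smul_iff hPQ (f := fun x => f x ^ 2)).mpr hf2P_int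
  -- integrability of f*p and f*m
  have hfsg_m : Measurable fun x => |f x| * Real.sqrt (g x) :=
    (hf_cont.measurable.abs).mul hgm.sqrt
  have hfsg2_int : Integrable (fun x => (|f x| * Real.sqrt (g x)) ^ 2) Q := by
    have he : (fun x => (|f x| * Real.sqrt (g x)) ^ 2) = fun x => g x * f x ^ 2 := by
      funext x
      rw [mul_pow, sq_abs, Real.sq_sqrt (hg0 x)]
      ring
    rw [he]; exact hgf2_int
  have hsp2_int : Integrable (fun x => Real.sqrt (p x) ^ 2) Q := by
    have he : (fun x => Real.sqrt (p x) ^ 2) = p := by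
      funext x; exact Real.sq_sqrt (hp0 x)
    rw [he]; exact hp_int
  have hsm2_int : Integrable (fun x => Real.sqrt (m x) ^ 2) Q := by
    have he : (fun x => Real.sqrt (m x) ^ 2) = m := by
      funext x; exact Real.sq_sqrt (hm0 x)
    rw [he]; exact hm_int
  have hdomp : ∀ x, |f x| * p x ≤ (|f x| * Real.sqrt (g x)) * Real.sqrt (p x) := by
    intro x
    have h1 : p x = Real.sqrt (p x) * Real.sqrt (p x) := (Real.mul_self_sqrt (hp0 x)).symm
    have h2 : Real.sqrt (p x) ≤ Real.sqrt (g x) := Real.sqrt_le_sqrt (hp_le_g x)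
    calc |f x| * p x = |f x| * Real.sqrt (p x) * Real.sqrt (p x) := by
          conv_lhs => rw [h1]
          ring
      _ ≤ |f x| * Real.sqrt (g x) * Real.sqrt (p x) := by
          apply mul_le_mul_of_nonneg_right _ (Real.sqrt_nonneg _)
          exact mul_le_mul_of_nonneg_left h2 (abs_nonneg _)
  have hdomm : ∀ x, |f x| * m x ≤ |f x| * Real.sqrt (m x) := by
    intro x
    have h1 : m x ≤ Real.sqrt (m x) := by
      nlinarith [Real.sq_sqrt (hm0 x), Real.sqrt_nonneg (m x), hm_le_one x, hm0 x,
        Real.sqrt_le_sqrt (hm_le_one x), Real.sqrt_one]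
    exact mul_le_mul_of_nonneg_left h1 (abs_nonneg _)
  have huvp_int : Integrable (fun x => (|f x| * Real.sqrt (g x)) * Real.sqrt (p x)) Q :=
    integrable_mul_of_sq hfsg_m.aestronglyMeasurable (hpm.sqrt).aestronglyMeasurable
      hfsg2_int hsp2_int
  have huvm_int : Integrable (fun x => |f x| * Real.sqrt (m x)) Q :=
    integrable_mul_of_sq (hf_cont.measurable.abs).aestronglyMeasurable
      (hmm.sqrt).aestronglyMeasurable (by simpa [sq_abs] using hf2Q_int) hsm2_int
  have hfp_abs_int : Integrable (fun x => |f x| * p x) Q := by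
    refine Integrable.mono' huvp_int ((hf_cont.measurable.abs.mul hpm).aestronglyMeasurable) ?_
    filter_upwards with x
    rw [Real.norm_of_nonneg (mul_nonneg (abs_nonneg _) (hp0 x))]
    exact hdomp x
  have hfm_abs_int : Integrable (fun x => |f x| * m x) Q := by
    refine Integrable.mono' huvm_int ((hf_cont.measurable.abs.mul hmm).aestronglyMeasurable) ?_
    filter_upwards with x
    rw [Real.norm_of_nonneg (mul_nonneg (abs_nonneg _) (hm0 x))]
    exact hdomm x
  have hfp_int : Integrable (fun x => f x * p x) Q := by
    refine Integrable.mono' hfp_abs_int ((hf_cont.measurable.mul hpm).aestronglyMeasurable) ?_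
    filter_upwards with x
    rw [Real.norm_eq_abs, abs_mul, abs_of_nonneg (hp0 x)]
  have hfm_int : Integrable (fun x => f x * m x) Q := by
    refine Integrable.mono' hfm_abs_int ((hf_cont.measurable.mul hmm).aestronglyMeasurable) ?_
    filter_upwards with x
    rw [Real.norm_eq_abs, abs_mul, abs_of_nonneg (hm0 x)]
  -- key identity : n^2 = ∫ f p - ∫ f m
  have hsplit : ∫ x, f x ∂P - ∫ x, f x ∂Q = (∫ x, f x * p x ∂Q) - ∫ x, f x * m x ∂Q := by
    have he : (fun x => g x * f x) = fun x => f x + (f x * p x - f x * m x) := by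
      funext x
      have h := hpm_eq x
      linear_combination (-(f x)) * h
    have hi : Integrable (fun x => f x * p x - f x * m x) Q := hfp_int.sub hfm_int
    rw [← hgf_eq, he, integral_add hf_int_Q hi, integral_sub hfp_int hfm_int]
    ring
  have hn2_eq : (∫ x, f x * p x ∂Q) - ∫ x, f x * m x ∂Q = n ^ 2 := by
    rw [← hsplit, hfP_mean, hfQ_mean]
    linarith [hamPQ]
  -- Cauchy-Schwarz bounds
  have hCSp : ∫ x, |f x| * p x ∂Q ≤ Real.sqrt AP * Real.sqrt t := by
    have h1 : ∫ x, |f x| * p x ∂Q ≤ ∫ x, (|f x| * Real.sqrt (g x)) * Real.sqrt (p x) ∂Q :=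
      integral_mono hfp_abs_int huvp_int hdomp
    have h2 := abs_integral_mul_le hfsg_m.aestronglyMeasurable (hpm.sqrt).aestronglyMeasurable
      hfsg2_int hsp2_int
    have h3 : ∫ x, (|f x| * Real.sqrt (g x)) ^ 2 ∂Q = AP := by
      rw [show (fun x => (|f x| * Real.sqrt (g x)) ^ 2) = fun x => g x * f x ^ 2 by
        funext x; rw [mul_pow, sq_abs, Real.sq_sqrt (hg0 x)]; ring]
      exact hgf2_eq
    have h4 : ∫ x, Real.sqrt (p x) ^ 2 ∂Q = t := by
      rw [show (fun x => Real.sqrt (p x) ^ 2) = p from funext fun x => Real.sq_sqrt (hp0 x)]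
    rw [h3, h4] at h2
    calc ∫ x, |f x| * p x ∂Q ≤ ∫ x, (|f x| * Real.sqrt (g x)) * Real.sqrt (p x) ∂Q := h1
      _ ≤ |∫ x, (|f x| * Real.sqrt (g x)) * Real.sqrt (p x) ∂Q| := le_abs_self _
      _ ≤ Real.sqrt AP * Real.sqrt t := h2
  have hCSm : ∫ x, |f x| * m x ∂Q ≤ Real.sqrt AQ * Real.sqrt t := by
    have h1 : ∫ x, |f x| * m x ∂Q ≤ ∫ x, |f x| * Real.sqrt (m x) ∂Q :=
      integral_mono hfm_abs_int huvm_int hdomm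
    have h2 := abs_integral_mul_le (hf_cont.measurable.abs).aestronglyMeasurable
      (hmm.sqrt).aestronglyMeasurable (by simpa [sq_abs] using hf2Q_int) hsm2_int
    have h3 : ∫ x, |f x| ^ 2 ∂Q = AQ := by
      rw [show (fun x => |f x| ^ 2) = fun x => f x ^ 2 from funext fun x => sq_abs _]
    have h4 : ∫ x, Real.sqrt (m x) ^ 2 ∂Q = t := by
      rw [show (fun x => Real.sqrt (m x) ^ 2) = m from funext fun x => Real.sq_sqrt (hm0 x), htm]
    rw [h3, h4] at h2
    calc ∫ x, |f x| * m x ∂Q ≤ ∫ x, |f x| * Real.sqrt (m x) ∂Q := h1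
      _ ≤ |∫ x, |f x| * Real.sqrt (m x) ∂Q| := le_abs_self _
      _ ≤ Real.sqrt AQ * Real.sqrt t := h2
  -- combine
  have hfp_le : ∫ x, f x * p x ∂Q ≤ ∫ x, |f x| * p x ∂Q := by
    refine integral_mono hfp_int hfp_abs_int fun x => ?_
    exact mul_le_mul_of_nonneg_right (le_abs_self _) (hp0 x)
  have hfm_le : -(∫ x, f x * m x ∂Q) ≤ ∫ x, |f x| * m x ∂Q := by
    rw [← integral_neg]
    refine integral_mono (hfm_int.neg) hfm_abs_int fun x => ?_
    simp only
    rw [show -(f x * m x) = (-(f x)) * m x by ring]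
    exact mul_le_mul_of_nonneg_right (neg_le_abs _) (hm0 x)
  have hkey : n ^ 2 ≤ Real.sqrt t * (Real.sqrt AP + Real.sqrt AQ) := by
    have := hn2_eq
    nlinarith [hCSp, hCSm, hfp_le, hfm_le]
  -- final algebra
  have hsqt : Real.sqrt t ^ 2 = t := Real.sq_sqrt ht0
  have hsqAP : Real.sqrt AP ^ 2 = AP := Real.sq_sqrt hAP0
  have hsqAQ : Real.sqrt AQ ^ 2 = AQ := Real.sq_sqrt hAQ0
  have hs1 : n ^ 2 * n ^ 2 ≤ t * (Real.sqrt AP + Real.sqrt AQ) ^ 2 := by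
    have h := mul_self_le_mul_self (by positivity : (0:ℝ) ≤ n ^ 2) hkey
    calc n ^ 2 * n ^ 2 ≤ (Real.sqrt t * (Real.sqrt AP + Real.sqrt AQ))
          * (Real.sqrt t * (Real.sqrt AP + Real.sqrt AQ)) := h
      _ = t * (Real.sqrt AP + Real.sqrt AQ) ^ 2 := by linear_combination ((Real.sqrt AP + Real.sqrt AQ)^2) * hsqt
  have hs2 : (Real.sqrt AP + Real.sqrt AQ) ^ 2 ≤ 2 * (AP + AQ) := by
    nlinarith [sq_nonneg (Real.sqrt AP - Real.sqrt AQ), hsqAP, hsqAQ]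
  have hs3 : 2 * (AP + AQ) ≤ n ^ 2 * (2 * (SP + SQ) + n ^ 2) := by nlinarith [hAP, hAQ]
  calc n ^ 2 * n ^ 2 ≤ t * (Real.sqrt AP + Real.sqrt AQ) ^ 2 := hs1
    _ ≤ t * (n ^ 2 * (2 * (SP + SQ) + n ^ 2)) := by
        apply mul_le_mul_of_nonneg_left _ ht0
        linarith [hs2, hs3]
    _ = t * (n ^ 2 * (2 * (SP + SQ) + n ^ 2)) := rfl

end Auxiliary

/-- Kullback–Leibler divergence between measures: `∫ log (dP/dQ) dP` when `P ≪ Q`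
and the log-likelihood ratio is integrable, and `+∞` otherwise. -/
noncomputable def klDiv {α : Type*} [MeasurableSpace α] (P Q : Measure α) : EReal :=
  if P ≪ Q ∧ Integrable (llr P Q) P then ((∫ x, llr P Q x ∂P : ℝ) : EReal) else ⊤

/-- **Corollary 2.7.** For probability measures `P, Q` on `ℝ^d` with finite second
moments, mean vectors `m_P, m_Q` and second central moments `S_P, S_Q`, setting
`a = m_P - m_Q`, the Kullback–Leibler divergence satisfies
`KL(P‖Q) ≥ 2 (‖a‖² / (2(S_P + S_Q) + ‖a‖²))²`. -/
theorem klDiv_ge_of_moments {d : ℕ}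
    (P Q : Measure (EuclideanSpace ℝ (Fin d)))
    [IsProbabilityMeasure P] [IsProbabilityMeasure Q]
    (h1P : Integrable (fun x => x) P) (h1Q : Integrable (fun x => x) Q)
    (mP mQ : EuclideanSpace ℝ (Fin d))
    (hmP : mP = ∫ x, x ∂P) (hmQ : mQ = ∫ x, x ∂Q)
    (h2P : Integrable (fun x => ‖x - mP‖ ^ 2) P)
    (h2Q : Integrable (fun x => ‖x - mQ‖ ^ 2) Q)
    (SP SQ : ℝ)
    (hSP : SP = ∫ x, ‖x - mP‖ ^ 2 ∂P)
    (hSQ : SQ = ∫ x, ‖x - mQ‖ ^ 2 ∂Q)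
    (a : EuclideanSpace ℝ (Fin d)) (ha : a = mP - mQ)
    (hpos : 0 < 2 * (SP + SQ) + ‖a‖ ^ 2) :
    ((2 * (‖a‖ ^ 2 / (2 * (SP + SQ) + ‖a‖ ^ 2)) ^ 2 : ℝ) : EReal) ≤ klDiv P Q := by
  by_cases h : P ≪ Q ∧ Integrable (llr P Q) P
  · rw [klDiv, if_pos h]
    rw [EReal.coe_le_coe_iff]
    set t : ℝ := ∫ x, max ((P.rnDeriv Q x).toReal - 1) 0 ∂Q with ht_def
    have ht0 : 0 ≤ t := integral_nonneg fun x => le_max_right _ _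
    have hPinsker : 2 * t ^ 2 ≤ ∫ x, llr P Q x ∂P := pinsker_aux h.1 h.2
    have hMoments := mean_sep_aux P Q h.1 h1P h1Q mP mQ hmP hmQ h2P h2Q SP SQ hSP hSQ a ha
    set n2 : ℝ := ‖a‖ ^ 2 with hn2_def
    have hn20 : 0 ≤ n2 := sq_nonneg _
    set D : ℝ := 2 * (SP + SQ) + n2 with hD_def
    have hr_le_t : n2 / D ≤ t := by
      rcases eq_or_lt_of_le hn20 with h0 | h0
      · rw [← h0]
        simpa using ht0
      · rw [div_le_iff₀ hpos]
        have : n2 * n2 ≤ t * (n2 * D) := hMoments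
        nlinarith [this, h0]
    have hr0 : 0 ≤ n2 / D := div_nonneg hn20 hpos.le
    nlinarith [hPinsker, hr_le_t, hr0, ht0]
  · rw [klDiv, if_neg h]
    exact le_top
end

section
/- Let P and Q be probability measures on ℝ^d with finite second moments, mean vectors m_P and m_Q, and second central moments S_P = ∫‖x−m_P‖² dP(x) and S_Q = ∫‖x−m_Q‖² dQ(x); write S = S_P + S_Q. If KL(P‖Q) ≤ ε for some 0 ≤ ε < 2, then ‖m_P − m_Q‖² ≤ 2√(ε/2) · S / (1 − √(ε/2)). -/
open MeasureTheory Classical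

/-- Cauchy–Schwarz for integrals. -/
lemma integral_sq_cauchy_schwarz {α : Type*} [MeasurableSpace α] {μ : Measure α} {f g : α → ℝ}
    (hf : Integrable (fun x => f x ^ 2) μ) (hg : Integrable (fun x => g x ^ 2) μ)
    (hfg : Integrable (fun x => f x * g x) μ) :
    (∫ x, f x * g x ∂μ) ^ 2 ≤ (∫ x, f x ^ 2 ∂μ) * (∫ x, g x ^ 2 ∂μ) := by
  have h : ∀ t : ℝ, 0 ≤ (∫ x, g x ^ 2 ∂μ) * (t * t) + (2 * ∫ x, f x * g x ∂μ) * t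
      + ∫ x, f x ^ 2 ∂μ := by
    intro t
    have e0 : (fun x => (f x + t * g x) ^ 2)
        = fun x => (t * t) * g x ^ 2 + (2 * t) * (f x * g x) + f x ^ 2 :=
      funext fun x => by ring
    have e1 : ∫ x, (f x + t * g x) ^ 2 ∂μ
        = ((t * t) * ∫ x, g x ^ 2 ∂μ + (2 * t) * ∫ x, f x * g x ∂μ) + ∫ x, f x ^ 2 ∂μ := by
      have i1 : Integrable (fun x => (t * t) * g x ^ 2) μ := hg.const_mul (t * t)
      have i2 : Integrable (fun x => (2 * t) * (f x * g x)) μ := hfg.const_mul (2 * t)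
      have i12 : Integrable (fun x => t * t * g x ^ 2 + 2 * t * (f x * g x)) μ := i1.add i2
      rw [e0, integral_add i12 hf, integral_add i1 i2, integral_const_mul,
        integral_const_mul]
    nlinarith [integral_nonneg (f := fun x => (f x + t * g x) ^ 2) (fun x => sq_nonneg (f x + t * g x)) (μ := μ), e1]
  have hd := discrim_le_zero h
  rw [discrim] at hd
  nlinarith [hd]

/-- Key pointwise inequality behind Pinsker: `3(x-1)² ≤ 2(x+2)(x log x - x + 1)`. -/
lemma key_log_ineq (x : ℝ) (hx : 0 ≤ x) :
    3 * (x - 1) ^ 2 ≤ 2 * (x + 2) * (x * Real.log x - x + 1) := by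
  rcases eq_or_lt_of_le hx with h0 | hx
  · rw [← h0]; norm_num
  set F : ℝ → ℝ := fun y => Real.log y - (5 * y ^ 2 - 4 * y - 1) / (2 * y ^ 2 + 4 * y) with hF
  have hderiv : ∀ y : ℝ, 0 < y → HasDerivAt F ((y - 1) ^ 3 / (y ^ 2 * (y + 2) ^ 2)) y := by
    intro y hy
    have hy0 : y ≠ 0 := ne_of_gt hy
    have hden : 2 * y ^ 2 + 4 * y ≠ 0 := by positivity
    have h1 : HasDerivAt Real.log y⁻¹ y := Real.hasDerivAt_log hy0
    have hnum : HasDerivAt (fun z : ℝ => 5 * z ^ 2 - 4 * z - 1) (10 * y - 4) y := by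
      have := (((hasDerivAt_pow 2 y).const_mul 5).sub ((hasDerivAt_id y).const_mul 4)).sub_const 1
      exact this.congr_deriv (by push_cast; ring)
    have hden' : HasDerivAt (fun z : ℝ => 2 * z ^ 2 + 4 * z) (4 * y + 4) y := by
      have := ((hasDerivAt_pow 2 y).const_mul 2).add ((hasDerivAt_id y).const_mul 4)
      exact this.congr_deriv (by push_cast; ring)
    have h2 := hnum.div hden' hden
    have h3 := h1.sub h2
    refine h3.congr_deriv ?_
    have hy2 : y + 2 ≠ 0 := by positivity
    field_simp
    ring
  have hF1 : F 1 = 0 := by simp [hF]; norm_num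
  have hFnonneg : 0 ≤ F x := by
    rcases le_or_gt 1 x with hx1 | hx1
    · have hmono : MonotoneOn F (Set.Icc 1 x) := by
        apply monotoneOn_of_deriv_nonneg (convex_Icc 1 x)
        · intro y hy
          exact (hderiv y (lt_of_lt_of_le one_pos hy.1)).continuousAt.continuousWithinAt
        · intro y hy
          rw [interior_Icc] at hy
          exact (hderiv y (lt_trans one_pos hy.1)).differentiableAt.differentiableWithinAt
        · intro y hy
          rw [interior_Icc] at hy
          rw [(hderiv y (lt_trans one_pos hy.1)).deriv]
          have h1 : (0:ℝ) ≤ (y - 1) ^ 3 := pow_nonneg (by linarith [hy.1]) 3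
          exact div_nonneg h1 (by positivity)
      have h := hmono (Set.left_mem_Icc.mpr hx1) (Set.right_mem_Icc.mpr hx1) hx1
      rw [hF1] at h; exact h
    · have hanti : AntitoneOn F (Set.Icc x 1) := by
        apply antitoneOn_of_deriv_nonpos (convex_Icc x 1)
        · intro y hy
          exact (hderiv y (lt_of_lt_of_le hx hy.1)).continuousAt.continuousWithinAt
        · intro y hy
          rw [interior_Icc] at hy
          exact (hderiv y (lt_trans hx hy.1)).differentiableAt.differentiableWithinAt
        · intro y hy
          rw [interior_Icc] at hy
          rw [(hderiv y (lt_trans hx hy.1)).deriv]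
          apply div_nonpos_of_nonpos_of_nonneg
          · exact Odd.pow_nonpos (⟨1, by norm_num⟩) (by linarith [hy.2])
          · positivity
      have h := hanti (Set.left_mem_Icc.mpr hx1.le) (Set.right_mem_Icc.mpr hx1.le) hx1.le
      rw [hF1] at h; exact h
  have hden : (0:ℝ) < 2 * x ^ 2 + 4 * x := by positivity
  rw [hF, sub_nonneg, div_le_iff₀ hden] at hFnonneg
  nlinarith [hFnonneg]

set_option maxHeartbeats 4000000 in
/-- **Eq. (tvd-bound) of Lemma 3.1.** For probability measures `P, Q` on `ℝ^d` with
finite second moments, mean vectors `m_P, m_Q`, second central moments `S_P, S_Q`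
and `S = S_P + S_Q`: if `KL(P‖Q) ≤ ε` with `0 ≤ ε < 2`, then
`‖m_P - m_Q‖² ≤ 2 √(ε/2) S / (1 - √(ε/2))`. -/
theorem mean_dist_sq_le_of_klDiv_le {d : ℕ}
    (P Q : Measure (EuclideanSpace ℝ (Fin d)))
    [IsProbabilityMeasure P] [IsProbabilityMeasure Q]
    (h1P : Integrable (fun x => x) P) (h1Q : Integrable (fun x => x) Q)
    (mP mQ : EuclideanSpace ℝ (Fin d))
    (hmP : mP = ∫ x, x ∂P) (hmQ : mQ = ∫ x, x ∂Q)
    (h2P : Integrable (fun x => ‖x - mP‖ ^ 2) P)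
    (h2Q : Integrable (fun x => ‖x - mQ‖ ^ 2) Q)
    (SP SQ S : ℝ)
    (hSP : SP = ∫ x, ‖x - mP‖ ^ 2 ∂P)
    (hSQ : SQ = ∫ x, ‖x - mQ‖ ^ 2 ∂Q)
    (hS : S = SP + SQ)
    (ε : ℝ) (hε0 : 0 ≤ ε) (hε2 : ε < 2)
    (hKL : klDiv P Q ≤ ((ε : ℝ) : EReal)) :
    ‖mP - mQ‖ ^ 2 ≤ 2 * Real.sqrt (ε / 2) * S / (1 - Real.sqrt (ε / 2)) := by
  have hSP0 : 0 ≤ SP := hSP ▸ integral_nonneg fun x => by positivity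
  have hSQ0 : 0 ≤ SQ := hSQ ▸ integral_nonneg fun x => by positivity
  have hS0 : 0 ≤ S := by rw [hS]; linarith only [hSP0, hSQ0]
  set t := Real.sqrt (ε / 2) with ht
  have ht0 : 0 ≤ t := Real.sqrt_nonneg _
  have ht1 : t < 1 := by
    rw [ht, show (1:ℝ) = Real.sqrt 1 by simp]
    exact Real.sqrt_lt_sqrt (by linarith only [hε0]) (by linarith only [hε2])
  -- Step 0: unpack the KL hypothesis
  by_cases hc : P ≪ Q ∧ Integrable (llr P Q) P
  swap
  · rw [klDiv, if_neg hc] at hKL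
    exact absurd (top_le_iff.mp hKL) (EReal.coe_ne_top ε)
  obtain ⟨hac, hint⟩ := hc
  haveI : SFinite P := inferInstance
  haveI : SigmaFinite Q := inferInstance
  rw [klDiv, if_pos ⟨hac, hint⟩, EReal.coe_le_coe_iff] at hKL
  -- the density
  set ρ : EuclideanSpace ℝ (Fin d) → ℝ := fun x => (P.rnDeriv Q x).toReal with hρ
  have hρmeas : Measurable ρ := (Measure.measurable_rnDeriv P Q).ennreal_toReal
  have hρ0 : ∀ x, 0 ≤ ρ x := fun x => ENNReal.toReal_nonneg
  have hρint : Integrable ρ Q := Measure.integrable_toReal_rnDeriv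
  have hρ1 : ∫ x, ρ x ∂Q = 1 := by
    rw [hρ, Measure.integral_toReal_rnDeriv hac]; simp
  have hKLQ : ∫ x, ρ x * Real.log (ρ x) ∂Q = ∫ x, llr P Q x ∂P := by
    rw [← integral_rnDeriv_smul hac (f := llr P Q)]
    rfl
  have hKLint : Integrable (fun x => ρ x * Real.log (ρ x)) Q := by
    have h := (integrable_rnDeriv_smul_iff hac).mpr hint
    simpa [llr_def, smul_eq_mul] using h
  -- Pinsker
  set D := ∫ x, |ρ x - 1| ∂Q with hD
  have habs_int : Integrable (fun x => |ρ x - 1|) Q := (hρint.sub (integrable_const 1)).abs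
  have hD0 : 0 ≤ D := integral_nonneg fun x => abs_nonneg _
  have hplus2 : ∀ x, (0:ℝ) < ρ x + 2 := fun x => by linarith only [hρ0 x]
  set f1 : EuclideanSpace ℝ (Fin d) → ℝ := fun x => |ρ x - 1| / Real.sqrt (ρ x + 2) with hf1
  set f2 : EuclideanSpace ℝ (Fin d) → ℝ := fun x => Real.sqrt (ρ x + 2) with hf2
  have hpt : ∀ x, f1 x * f2 x = |ρ x - 1| := by
    intro x
    rw [hf1, hf2]
    exact div_mul_cancel₀ _ (Real.sqrt_ne_zero'.mpr (hplus2 x))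
  have hf1sq : ∀ x, f1 x ^ 2 = (ρ x - 1) ^ 2 / (ρ x + 2) := by
    intro x
    rw [hf1, div_pow, sq_abs, Real.sq_sqrt (hplus2 x).le]
  have hf2sq : ∀ x, f2 x ^ 2 = ρ x + 2 := fun x => Real.sq_sqrt (hplus2 x).le
  have hf2sq_int : Integrable (fun x => f2 x ^ 2) Q := by
    have : (fun x => f2 x ^ 2) = fun x => ρ x + 2 := funext hf2sq
    rw [this]; exact hρint.add (integrable_const 2)
  have habs_le : ∀ x, |ρ x - 1| ≤ ρ x + 2 := by
    intro x
    rw [abs_le]; constructor <;> [linarith only [hρ0 x]; linarith only [hρ0 x]]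
  have hf1sq_le : ∀ x, f1 x ^ 2 ≤ |ρ x - 1| := by
    intro x
    rw [hf1sq x, div_le_iff₀ (hplus2 x)]
    nlinarith only [sq_abs (ρ x - 1), abs_nonneg (ρ x - 1), habs_le x]
  have hf1meas : Measurable f1 :=
    (hρmeas.sub measurable_const).abs.div ((hρmeas.add measurable_const).sqrt)
  have hf1sq_int : Integrable (fun x => f1 x ^ 2) Q := by
    apply habs_int.mono ((hf1meas.pow_const 2).aestronglyMeasurable)
    filter_upwards with x
    rw [Real.norm_eq_abs, Real.norm_eq_abs, abs_abs, abs_of_nonneg (sq_nonneg _)]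
    exact hf1sq_le x
  have hf1f2_int : Integrable (fun x => f1 x * f2 x) Q := by
    have : (fun x => f1 x * f2 x) = fun x => |ρ x - 1| := funext hpt
    rw [this]; exact habs_int
  have hCS1 := integral_sq_cauchy_schwarz hf1sq_int hf2sq_int hf1f2_int
  have hintf1f2 : ∫ x, f1 x * f2 x ∂Q = D := by
    rw [hD]; exact integral_congr_ae (Filter.Eventually.of_forall hpt)
  have hintf2 : ∫ x, f2 x ^ 2 ∂Q = 3 := by
    have : (fun x => f2 x ^ 2) = fun x => ρ x + 2 := funext hf2sq
    rw [this, integral_add hρint (integrable_const 2), hρ1, integral_const]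
    simp; norm_num
  have hGint : Integrable (fun x => (2/3) * (ρ x * Real.log (ρ x) - ρ x + 1)) Q :=
    (((hKLint.sub hρint).add (integrable_const 1)).const_mul _)
  have hintf1 : ∫ x, f1 x ^ 2 ∂Q ≤ (2/3) * ∫ x, llr P Q x ∂P := by
    have hmono : ∫ x, f1 x ^ 2 ∂Q ≤ ∫ x, (2/3) * (ρ x * Real.log (ρ x) - ρ x + 1) ∂Q := by
      apply integral_mono hf1sq_int hGint
      intro x
      dsimp only
      rw [hf1sq x, div_le_iff₀ (hplus2 x)]
      nlinarith only [key_log_ineq (ρ x) (hρ0 x), hplus2 x]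
    have heq : ∫ x, (2/3) * (ρ x * Real.log (ρ x) - ρ x + 1) ∂Q
        = (2/3) * ∫ x, llr P Q x ∂P := by
      have i1 : Integrable (fun x => ρ x * Real.log (ρ x) - ρ x) Q := hKLint.sub hρint
      rw [integral_const_mul, integral_add i1 (integrable_const 1),
        integral_sub hKLint hρint, hρ1, hKLQ, integral_const]
      simp
    linarith only [hmono, heq.le, heq.ge]
  have hDsq : D ^ 2 ≤ 2 * ε := by
    calc D ^ 2 = (∫ x, f1 x * f2 x ∂Q) ^ 2 := by rw [hintf1f2]
    _ ≤ (∫ x, f1 x ^ 2 ∂Q) * (∫ x, f2 x ^ 2 ∂Q) := hCS1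
    _ = (∫ x, f1 x ^ 2 ∂Q) * 3 := by rw [hintf2]
    _ ≤ ((2/3) * ∫ x, llr P Q x ∂P) * 3 := by
        apply mul_le_mul_of_nonneg_right hintf1 (by norm_num)
    _ ≤ ((2/3) * ε) * 3 := by linarith only [hKL]
    _ = 2 * ε := by ring
  have hDle : D ≤ 2 * t := by
    have h1 : D = Real.sqrt (D ^ 2) := (Real.sqrt_sq hD0).symm
    have h2 : Real.sqrt (D ^ 2) ≤ Real.sqrt (2 * ε) := Real.sqrt_le_sqrt hDsq
    have h3 : Real.sqrt (2 * ε) = 2 * t := by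
      rw [ht, show (2:ℝ) * ε = 2^2 * (ε / 2) by ring, Real.sqrt_mul (by norm_num) _,
        Real.sqrt_sq (by norm_num)]
    linarith only [h1, h2, h3]
  -- mean part
  set v := mP - mQ with hv
  set r2 : ℝ := ‖v‖ ^ 2 with hr2def
  have hr2nn : 0 ≤ r2 := sq_nonneg _
  set c : EuclideanSpace ℝ (Fin d) := (2:ℝ)⁻¹ • (mP + mQ) with hc
  set f : EuclideanSpace ℝ (Fin d) → ℝ := fun x => (inner ℝ v (x - c) : ℝ) with hf
  have e1 : (inner ℝ v (mP + mQ) : ℝ) = inner ℝ v mP + inner ℝ v mQ := inner_add_right _ _ _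
  have e2 : (inner ℝ v mP : ℝ) - inner ℝ v mQ = inner ℝ v (mP - mQ) := (inner_sub_right _ _ _).symm
  have e3 : (inner ℝ v (mP - mQ) : ℝ) = r2 := by
    rw [← hv, real_inner_self_eq_norm_sq, hr2def]
  have ec : (inner ℝ v c : ℝ) = (2:ℝ)⁻¹ * (inner ℝ v mP + inner ℝ v mQ) := by
    rw [hc, real_inner_smul_right, e1]
  have hinner_mPc : (inner ℝ v (mP - c) : ℝ) = r2 / 2 := by
    rw [inner_sub_right, ec]
    linarith only [e2, e3]
  have hinner_mQc : (inner ℝ v (mQ - c) : ℝ) = -(r2 / 2) := by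
    rw [inner_sub_right, ec]
    linarith only [e2, e3]
  have hxcP_int : Integrable (fun x => x - c) P := h1P.sub (integrable_const c)
  have hxcQ_int : Integrable (fun x => x - c) Q := h1Q.sub (integrable_const c)
  have hfPint : Integrable f P := Integrable.const_inner v hxcP_int
  have hfQint : Integrable f Q := Integrable.const_inner v hxcQ_int
  have hintP : ∫ x, f x ∂P = r2 / 2 := by
    rw [hf, integral_inner hxcP_int v]
    have h : ∫ x, (x - c) ∂P = mP - c := by
      rw [integral_sub h1P (integrable_const c), integral_const, ← hmP]
      simp [measure_univ]
    rw [h, hinner_mPc]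
  have hintQ : ∫ x, f x ∂Q = -(r2 / 2) := by
    rw [hf, integral_inner hxcQ_int v]
    have h : ∫ x, (x - c) ∂Q = mQ - c := by
      rw [integral_sub h1Q (integrable_const c), integral_const, ← hmQ]
      simp [measure_univ]
    rw [h, hinner_mQc]
  -- second moments of f
  set aP : EuclideanSpace ℝ (Fin d) → ℝ := fun x => (inner ℝ v (x - mP) : ℝ) with haP
  set aQ : EuclideanSpace ℝ (Fin d) → ℝ := fun x => (inner ℝ v (x - mQ) : ℝ) with haQ
  have hxmP_int : Integrable (fun x => x - mP) P := h1P.sub (integrable_const mP)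
  have hxmQ_int : Integrable (fun x => x - mQ) Q := h1Q.sub (integrable_const mQ)
  have haPint : Integrable aP P := Integrable.const_inner v hxmP_int
  have haQint : Integrable aQ Q := Integrable.const_inner v hxmQ_int
  have haPmean : ∫ x, aP x ∂P = 0 := by
    rw [haP, integral_inner hxmP_int v]
    have h : ∫ x, (x - mP) ∂P = 0 := by
      rw [integral_sub h1P (integrable_const mP), integral_const, ← hmP]
      simp [measure_univ]
    rw [h, inner_zero_right]
  have haQmean : ∫ x, aQ x ∂Q = 0 := by
    rw [haQ, integral_inner hxmQ_int v]
    have h : ∫ x, (x - mQ) ∂Q = 0 := by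
      rw [integral_sub h1Q (integrable_const mQ), integral_const, ← hmQ]
      simp [measure_univ]
    rw [h, inner_zero_right]
  have haPcont : Continuous aP :=
    continuous_const.inner (continuous_id.sub continuous_const)
  have haQcont : Continuous aQ :=
    continuous_const.inner (continuous_id.sub continuous_const)
  have haPsq_le : ∀ x, aP x ^ 2 ≤ ‖v‖ ^ 2 * ‖x - mP‖ ^ 2 := by
    intro x
    have h := abs_real_inner_le_norm v (x - mP)
    calc aP x ^ 2 = |aP x| ^ 2 := (sq_abs _).symm
    _ ≤ (‖v‖ * ‖x - mP‖) ^ 2 := by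
        apply pow_le_pow_left₀ (abs_nonneg _) h
    _ = ‖v‖ ^ 2 * ‖x - mP‖ ^ 2 := by ring
  have haQsq_le : ∀ x, aQ x ^ 2 ≤ ‖v‖ ^ 2 * ‖x - mQ‖ ^ 2 := by
    intro x
    have h := abs_real_inner_le_norm v (x - mQ)
    calc aQ x ^ 2 = |aQ x| ^ 2 := (sq_abs _).symm
    _ ≤ (‖v‖ * ‖x - mQ‖) ^ 2 := by
        apply pow_le_pow_left₀ (abs_nonneg _) h
    _ = ‖v‖ ^ 2 * ‖x - mQ‖ ^ 2 := by ring
  have haPsq_int : Integrable (fun x => aP x ^ 2) P := by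
    apply (h2P.const_mul (‖v‖ ^ 2)).mono ((haPcont.pow 2).aestronglyMeasurable)
    filter_upwards with x
    rw [Real.norm_eq_abs, Real.norm_eq_abs, abs_of_nonneg (sq_nonneg _),
      abs_of_nonneg (by positivity : (0:ℝ) ≤ ‖v‖ ^ 2 * ‖x - mP‖ ^ 2)]
    exact haPsq_le x
  have haQsq_int : Integrable (fun x => aQ x ^ 2) Q := by
    apply (h2Q.const_mul (‖v‖ ^ 2)).mono ((haQcont.pow 2).aestronglyMeasurable)
    filter_upwards with x
    rw [Real.norm_eq_abs, Real.norm_eq_abs, abs_of_nonneg (sq_nonneg _),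
      abs_of_nonneg (by positivity : (0:ℝ) ≤ ‖v‖ ^ 2 * ‖x - mQ‖ ^ 2)]
    exact haQsq_le x
  have haPsq_bound : ∫ x, aP x ^ 2 ∂P ≤ r2 * SP := by
    rw [hSP, hr2def, ← integral_const_mul]
    exact integral_mono haPsq_int (h2P.const_mul _) haPsq_le
  have haQsq_bound : ∫ x, aQ x ^ 2 ∂Q ≤ r2 * SQ := by
    rw [hSQ, hr2def, ← integral_const_mul]
    exact integral_mono haQsq_int (h2Q.const_mul _) haQsq_le
  have hf_eq_P : ∀ x, f x = aP x + r2 / 2 := by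
    intro x
    show (inner ℝ v (x - c) : ℝ) = (inner ℝ v (x - mP) : ℝ) + r2 / 2
    rw [← hinner_mPc, show x - c = (x - mP) + (mP - c) by abel, inner_add_right]
  have hf_eq_Q : ∀ x, f x = aQ x - r2 / 2 := by
    intro x
    show (inner ℝ v (x - c) : ℝ) = (inner ℝ v (x - mQ) : ℝ) - r2 / 2
    rw [show x - c = (x - mQ) + (mQ - c) by abel, inner_add_right, hinner_mQc]
    ring
  have hfsqP_int : Integrable (fun x => f x ^ 2) P := by
    have e : (fun x => f x ^ 2) = fun x => aP x ^ 2 + r2 * aP x + (r2 / 2) ^ 2 :=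
      funext fun x => by rw [hf_eq_P x]; ring
    rw [e]
    exact (haPsq_int.add (haPint.const_mul r2)).add (integrable_const _)
  have hfsqQ_int : Integrable (fun x => f x ^ 2) Q := by
    have e : (fun x => f x ^ 2) = fun x => aQ x ^ 2 + (-r2) * aQ x + (r2 / 2) ^ 2 :=
      funext fun x => by rw [hf_eq_Q x]; ring
    rw [e]
    exact (haQsq_int.add (haQint.const_mul _)).add (integrable_const _)
  have hintfsqP : ∫ x, f x ^ 2 ∂P ≤ r2 * SP + r2 ^ 2 / 4 := by
    have e : (fun x => f x ^ 2) = fun x => aP x ^ 2 + r2 * aP x + (r2 / 2) ^ 2 :=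
      funext fun x => by rw [hf_eq_P x]; ring
    have i1 : Integrable (fun x => aP x ^ 2 + r2 * aP x) P :=
      haPsq_int.add (haPint.const_mul r2)
    calc ∫ x, f x ^ 2 ∂P
        = (∫ x, aP x ^ 2 ∂P) + r2 * (∫ x, aP x ∂P) + (r2 / 2) ^ 2 := by
          rw [e, integral_add i1 (integrable_const _),
            integral_add haPsq_int (haPint.const_mul r2), integral_const_mul, integral_const]
          simp [measure_univ]
    _ = (∫ x, aP x ^ 2 ∂P) + (r2 / 2) ^ 2 := by rw [haPmean]; ring
    _ ≤ r2 * SP + r2 ^ 2 / 4 := by linarith only [haPsq_bound]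
  have hintfsqQ : ∫ x, f x ^ 2 ∂Q ≤ r2 * SQ + r2 ^ 2 / 4 := by
    have e : (fun x => f x ^ 2) = fun x => aQ x ^ 2 + (-r2) * aQ x + (r2 / 2) ^ 2 :=
      funext fun x => by rw [hf_eq_Q x]; ring
    have i1 : Integrable (fun x => aQ x ^ 2 + (-r2) * aQ x) Q :=
      haQsq_int.add (haQint.const_mul _)
    calc ∫ x, f x ^ 2 ∂Q
        = (∫ x, aQ x ^ 2 ∂Q) + (-r2) * (∫ x, aQ x ∂Q) + (r2 / 2) ^ 2 := by
          rw [e, integral_add i1 (integrable_const _),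
            integral_add haQsq_int (haQint.const_mul _), integral_const_mul, integral_const]
          simp [measure_univ]
    _ = (∫ x, aQ x ^ 2 ∂Q) + (r2 / 2) ^ 2 := by rw [haQmean]; ring
    _ ≤ r2 * SQ + r2 ^ 2 / 4 := by linarith only [haQsq_bound]
  -- transfer to Q via the density
  have hρfint : Integrable (fun x => ρ x * f x) Q := by
    have h := (integrable_rnDeriv_smul_iff hac).mpr hfPint
    simpa [smul_eq_mul] using h
  have hintρf : ∫ x, ρ x * f x ∂Q = ∫ x, f x ∂P := by
    rw [← integral_rnDeriv_smul hac (f := f)]; rfl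
  have hfρ1_int : Integrable (fun x => f x * (ρ x - 1)) Q := by
    have e : (fun x => f x * (ρ x - 1)) = fun x => ρ x * f x - f x :=
      funext fun x => by ring
    rw [e]; exact hρfint.sub hfQint
  have hr2eq : r2 = ∫ x, f x * (ρ x - 1) ∂Q := by
    have e : (fun x => f x * (ρ x - 1)) = fun x => ρ x * f x - f x :=
      funext fun x => by ring
    rw [e, integral_sub hρfint hfQint, hintρf, hintP, hintQ]; ring
  -- second Cauchy–Schwarz
  set g1 : EuclideanSpace ℝ (Fin d) → ℝ := fun x => |f x| * Real.sqrt |ρ x - 1| with hg1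
  set g2 : EuclideanSpace ℝ (Fin d) → ℝ := fun x => Real.sqrt |ρ x - 1| with hg2
  have hg12 : ∀ x, g1 x * g2 x = |f x| * |ρ x - 1| := by
    intro x
    rw [hg1, hg2, mul_assoc, Real.mul_self_sqrt (abs_nonneg _)]
  have hg1sq : ∀ x, g1 x ^ 2 = f x ^ 2 * |ρ x - 1| := by
    intro x
    rw [hg1, mul_pow, sq_abs, Real.sq_sqrt (abs_nonneg _)]
  have hg2sq : ∀ x, g2 x ^ 2 = |ρ x - 1| := fun x => Real.sq_sqrt (abs_nonneg _)
  have hfcont : Continuous f :=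
    continuous_const.inner (continuous_id.sub continuous_const)
  have hρfsq_int : Integrable (fun x => ρ x * f x ^ 2) Q := by
    have h := (integrable_rnDeriv_smul_iff hac).mpr hfsqP_int
    simpa [smul_eq_mul] using h
  have habs1 : ∀ x, |ρ x - 1| ≤ ρ x + 1 := by
    intro x
    rw [abs_le]; constructor <;> [linarith only [hρ0 x]; linarith only [hρ0 x]]
  have hg1meas : Measurable g1 :=
    (hfcont.measurable.abs).mul ((hρmeas.sub measurable_const).abs.sqrt)
  have hg2meas : Measurable g2 := (hρmeas.sub measurable_const).abs.sqrt
  have hsumsq_int : Integrable (fun x => ρ x * f x ^ 2 + f x ^ 2) Q :=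
    hρfsq_int.add hfsqQ_int
  have hg1sq_int : Integrable (fun x => g1 x ^ 2) Q := by
    apply hsumsq_int.mono ((hg1meas.pow_const 2).aestronglyMeasurable)
    filter_upwards with x
    rw [Real.norm_eq_abs, Real.norm_eq_abs, abs_of_nonneg (sq_nonneg _), hg1sq x]
    have h1 : f x ^ 2 * |ρ x - 1| ≤ f x ^ 2 * (ρ x + 1) :=
      mul_le_mul_of_nonneg_left (habs1 x) (sq_nonneg _)
    have h2 : (0:ℝ) ≤ ρ x * f x ^ 2 + f x ^ 2 := by
      have := hρ0 x; positivity
    rw [abs_of_nonneg h2]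
    linarith only [h1]
  have hg2sq_int : Integrable (fun x => g2 x ^ 2) Q := by
    have e : (fun x => g2 x ^ 2) = fun x => |ρ x - 1| := funext hg2sq
    rw [e]; exact habs_int
  have hρabsf_int : Integrable (fun x => ρ x * |f x|) Q := by
    have h := (integrable_rnDeriv_smul_iff hac).mpr hfPint.abs
    simpa [smul_eq_mul] using h
  have hsumabs_int : Integrable (fun x => ρ x * |f x| + |f x|) Q :=
    hρabsf_int.add hfQint.abs
  have hg1g2_int : Integrable (fun x => g1 x * g2 x) Q := by
    apply hsumabs_int.mono ((hg1meas.mul hg2meas).aestronglyMeasurable)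
    filter_upwards with x
    rw [Real.norm_eq_abs, Real.norm_eq_abs, Pi.mul_apply, hg12 x,
      abs_of_nonneg (mul_nonneg (abs_nonneg _) (abs_nonneg _))]
    have h1 : |f x| * |ρ x - 1| ≤ |f x| * (ρ x + 1) :=
      mul_le_mul_of_nonneg_left (habs1 x) (abs_nonneg _)
    have h2 : (0:ℝ) ≤ ρ x * |f x| + |f x| := by
      have h3 := hρ0 x; have h4 := abs_nonneg (f x); positivity
    rw [abs_of_nonneg h2]
    linarith only [h1]
  have hCS2 := integral_sq_cauchy_schwarz hg1sq_int hg2sq_int hg1g2_int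
  have hE1 : ∫ x, g2 x ^ 2 ∂Q = D := by
    rw [hD]
    exact integral_congr_ae (Filter.Eventually.of_forall hg2sq)
  have hE2 : ∫ x, g1 x ^ 2 ∂Q ≤ r2 * S + r2 ^ 2 / 2 := by
    have hmono : ∫ x, g1 x ^ 2 ∂Q ≤ ∫ x, (ρ x * f x ^ 2 + f x ^ 2) ∂Q := by
      apply integral_mono hg1sq_int hsumsq_int
      intro x
      dsimp only
      rw [hg1sq x]
      linarith only [mul_le_mul_of_nonneg_left (habs1 x) (sq_nonneg (f x))]
    have heq : ∫ x, (ρ x * f x ^ 2 + f x ^ 2) ∂Q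
        = (∫ x, f x ^ 2 ∂P) + ∫ x, f x ^ 2 ∂Q := by
      rw [integral_add hρfsq_int hfsqQ_int]
      congr 1
      rw [← integral_rnDeriv_smul hac (f := fun x => f x ^ 2)]; rfl
    rw [hS]
    calc ∫ x, g1 x ^ 2 ∂Q ≤ (∫ x, f x ^ 2 ∂P) + ∫ x, f x ^ 2 ∂Q := by
          rw [← heq]; exact hmono
    _ ≤ (r2 * SP + r2 ^ 2 / 4) + (r2 * SQ + r2 ^ 2 / 4) := add_le_add hintfsqP hintfsqQ
    _ = r2 * (SP + SQ) + r2 ^ 2 / 2 := by ring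
  have hE3 : r2 ≤ ∫ x, g1 x * g2 x ∂Q := by
    have h1 : r2 ≤ |∫ x, f x * (ρ x - 1) ∂Q| := hr2eq ▸ le_abs_self _
    have h2 : |∫ x, f x * (ρ x - 1) ∂Q| ≤ ∫ x, |f x| * |ρ x - 1| ∂Q := by
      simpa [Real.norm_eq_abs, abs_mul] using
        norm_integral_le_integral_norm (fun x => f x * (ρ x - 1)) (μ := Q)
    have h3 : ∫ x, |f x| * |ρ x - 1| ∂Q = ∫ x, g1 x * g2 x ∂Q :=
      integral_congr_ae (Filter.Eventually.of_forall fun x => (hg12 x).symm)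
    linarith only [h1, h2, h3]
  have hfinal : r2 ^ 2 ≤ (r2 * S + r2 ^ 2 / 2) * D := by
    calc r2 ^ 2 ≤ (∫ x, g1 x * g2 x ∂Q) ^ 2 := by
          apply pow_le_pow_left₀ hr2nn hE3
    _ ≤ (∫ x, g1 x ^ 2 ∂Q) * (∫ x, g2 x ^ 2 ∂Q) := hCS2
    _ = (∫ x, g1 x ^ 2 ∂Q) * D := by rw [hE1]
    _ ≤ (r2 * S + r2 ^ 2 / 2) * D := mul_le_mul_of_nonneg_right hE2 hD0
  -- conclusion
  rcases eq_or_lt_of_le hr2nn with h0 | hpos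
  · rw [← h0]
    apply div_nonneg (by positivity) (by linarith only [ht1])
  · rw [le_div_iff₀ (by linarith only [ht1] : (0:ℝ) < 1 - t)]
    have hnn : (0:ℝ) ≤ r2 * S + r2 ^ 2 / 2 := by positivity
    have hstep : r2 ^ 2 ≤ 2 * t * (r2 * S) + t * r2 ^ 2 := by
      calc r2 ^ 2 ≤ (r2 * S + r2 ^ 2 / 2) * D := hfinal
      _ ≤ (r2 * S + r2 ^ 2 / 2) * (2 * t) := mul_le_mul_of_nonneg_left hDle hnn
      _ = 2 * t * (r2 * S) + t * r2 ^ 2 := by ring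
    have hkey : r2 * (1 - t) * r2 ≤ 2 * t * S * r2 := by linarith only [hstep]
    exact le_of_mul_le_mul_right hkey hpos
end

section
/- Let (Ω, μ) be a probability space and Y : Ω → ℝ an integrable random variable. Let ℓ : ℝ^d → ℝ be differentiable with L-Lipschitz gradient and with ∇ℓ(ω̃*) = 0 at a point ω̃* ∈ ℝ^d. Let P and Q be probability measures on ℝ^d with finite second moments, mean vectors m_P = ω* and m_Q = ω̃*, and second central moments S_P and S_Q; write C = S_P + S_Q. If KL(P‖Q) ≤ ε for some 0 ≤ ε < 2, then the performance difference satisfies |E[Y·ℓ(ω*)] − E[Y·ℓ(ω̃*)]| ≤ E[|Y|] · L · C · √(ε/2) / (1 − √(ε/2)). -/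
open MeasureTheory Classical

local notation "⟪" x ", " y "⟫" => @inner ℝ _ _ x y

lemma expb (x : ℝ) (h0 : 0 ≤ x) (h1 : x ≤ 1) :
    |Real.exp (-x) - (1 - x + x^2/2 - x^3/6)| ≤ x^4 * (5/96) := by
  have h := Real.exp_bound (x := -x) (by rw [abs_neg, abs_of_nonneg h0]; exact h1) (n := 4) (by norm_num)
  have he : ∑ m ∈ Finset.range 4, (-x) ^ m / (m.factorial : ℝ) = 1 - x + x^2/2 - x^3/6 := by
    simp [Finset.sum_range_succ, Nat.factorial]
    ring
  rw [he] at h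
  calc |Real.exp (-x) - (1 - x + x^2/2 - x^3/6)| ≤ |(-x)|^4 * (Nat.succ 4 / ((4:ℕ).factorial * 4)) := h
    _ ≤ x^4 * (5/96) := by
        rw [abs_neg, abs_of_nonneg h0]
        norm_num [Nat.factorial]

lemma poly_key (a : ℝ) (ha0 : 0 ≤ a) (ha1 : a ≤ 1) :
    2*(1 - (1 - a^2 + (a^2)^2/2 - (a^2)^3/6 - (a^2)^4*(5/96)))*(1-a)
      ≤ a*(1 - a^2 + (a^2)^2/2 - (a^2)^3/6 - (a^2)^4*(5/96))^2 := by
  have h1a : (0:ℝ) ≤ 1 - a := by linarith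
  have hterm : ∀ (c : ℝ) (i j : ℕ), 0 ≤ c → 0 ≤ c * a^i * (1-a)^j :=
    fun c i j hc => mul_nonneg (mul_nonneg hc (pow_nonneg ha0 i)) (pow_nonneg h1a j)
  have key : (0:ℝ) ≤ (1/1:ℝ)*a^1*(1-a)^16 + (14/1:ℝ)*a^2*(1-a)^15 + (90/1:ℝ)*a^3*(1-a)^14 + (351/1:ℝ)*a^4*(1-a)^13 + (924/1:ℝ)*a^5*(1-a)^12 + (5183/3:ℝ)*a^6*(1-a)^11 + (7048/3:ℝ)*a^7*(1-a)^10 + (37385/16:ℝ)*a^8*(1-a)^9 + (80719/48:ℝ)*a^9*(1-a)^8 + (10187/12:ℝ)*a^10*(1-a)^7 + (13513/48:ℝ)*a^11*(1-a)^6 + (325/6:ℝ)*a^12*(1-a)^5 + (1943/288:ℝ)*a^13*(1-a)^4 + (257/72:ℝ)*a^14*(1-a)^3 + (629/288:ℝ)*a^15*(1-a)^2 + (5/8:ℝ)*a^16*(1-a)^1 + (81/1024:ℝ)*a^17*(1-a)^0 := by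
    repeat' apply add_nonneg
    all_goals apply hterm; norm_num
  nlinarith [key]

lemma scalar_key (a B : ℝ) (ha0 : 0 ≤ a) (ha1 : a < 1) (hB1 : B ≤ 1)
    (hB : Real.exp (-a^2) ≤ B) : 2*(1-B)*(1-a) ≤ a*B^2 := by
  have hx0 : (0:ℝ) ≤ a^2 := sq_nonneg a
  have hx1 : a^2 ≤ 1 := by nlinarith
  have h := expb (a^2) hx0 hx1
  rw [abs_le] at h
  have hlB : 1 - a^2 + (a^2)^2/2 - (a^2)^3/6 - (a^2)^4*(5/96) ≤ B := by
    have := h.1; linarith [hB]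
  have hl0 : (0:ℝ) ≤ 1 - a^2 + (a^2)^2/2 - (a^2)^3/6 - (a^2)^4*(5/96) := by nlinarith
  have hB0 : 0 ≤ B := le_trans hl0 hlB
  have key := poly_key a ha0 ha1.le
  have h2 : 2*(1-B)*(1-a) ≤ 2*(1 - (1 - a^2 + (a^2)^2/2 - (a^2)^3/6 - (a^2)^4*(5/96)))*(1-a) := by
    nlinarith
  have h3 : a*(1 - a^2 + (a^2)^2/2 - (a^2)^3/6 - (a^2)^4*(5/96))^2 ≤ a*B^2 := by
    have := mul_self_le_mul_self hl0 hlB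
    nlinarith
  linarith


lemma integrable_mul_of_sq_s4 {α : Type*} [MeasurableSpace α] {μ : Measure α} {f g : α → ℝ}
    (hf : AEStronglyMeasurable f μ) (hg : AEStronglyMeasurable g μ)
    (hf2 : Integrable (fun x => f x ^ 2) μ) (hg2 : Integrable (fun x => g x ^ 2) μ) :
    Integrable (fun x => f x * g x) μ := by
  refine Integrable.mono ((hf2.add hg2).div_const 2) (hf.mul hg) ?_
  filter_upwards with x
  simp only [Real.norm_eq_abs, abs_mul, Pi.add_apply]
  rw [abs_of_nonneg (by positivity : (0:ℝ) ≤ (f x ^2 + g x ^2)/2)]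
  nlinarith [sq_nonneg (|f x| - |g x|), sq_abs (f x), sq_abs (g x), abs_nonneg (f x), abs_nonneg (g x)]

lemma cs_integral {α : Type*} [MeasurableSpace α] (μ : Measure α) [IsFiniteMeasure μ] {f g : α → ℝ}
    (hf : AEStronglyMeasurable f μ) (hg : AEStronglyMeasurable g μ)
    (hf2 : Integrable (fun x => f x ^ 2) μ) (hg2 : Integrable (fun x => g x ^ 2) μ) :
    ∫ x, f x * g x ∂μ ≤ Real.sqrt (∫ x, f x ^ 2 ∂μ) * Real.sqrt (∫ x, g x ^ 2 ∂μ) := by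
  have hmem_f : MemLp f 2 μ := (memLp_two_iff_integrable_sq hf).2 hf2
  have hmem_g : MemLp g 2 μ := (memLp_two_iff_integrable_sq hg).2 hg2
  have habs : ∫ x, f x * g x ∂μ ≤ ∫ x, |f x| * |g x| ∂μ := by
    refine integral_mono (integrable_mul_of_sq_s4 hf hg hf2 hg2) ?_ ?_
    · simpa [abs_mul] using (integrable_mul_of_sq_s4 hf hg hf2 hg2).abs
    · intro x; exact le_abs_self _ |>.trans (le_of_eq (abs_mul _ _))
  have hpq : Real.HolderConjugate 2 2 := Real.HolderConjugate.two_two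
  have h := integral_mul_le_Lp_mul_Lq_of_nonneg hpq
    (f := fun x => |f x|) (g := fun x => |g x|)
    (Filter.Eventually.of_forall fun x => abs_nonneg _)
    (Filter.Eventually.of_forall fun x => abs_nonneg _)
    (by rw [ENNReal.ofReal_ofNat]; exact hmem_f.abs) (by rw [ENNReal.ofReal_ofNat]; exact hmem_g.abs)
  have hf_eq : ∫ x, |f x| ^ (2:ℝ) ∂μ = ∫ x, f x ^ 2 ∂μ := by
    refine integral_congr_ae (Filter.Eventually.of_forall fun x => ?_)
    show |f x| ^ (2:ℝ) = f x ^ 2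
    rw [show ((2:ℝ)) = ((2:ℕ):ℝ) from by norm_num, Real.rpow_natCast, sq_abs]
  have hg_eq : ∫ x, |g x| ^ (2:ℝ) ∂μ = ∫ x, g x ^ 2 ∂μ := by
    refine integral_congr_ae (Filter.Eventually.of_forall fun x => ?_)
    show |g x| ^ (2:ℝ) = g x ^ 2
    rw [show ((2:ℝ)) = ((2:ℕ):ℝ) from by norm_num, Real.rpow_natCast, sq_abs]
  rw [hf_eq, hg_eq] at h
  calc ∫ x, f x * g x ∂μ ≤ ∫ x, |f x| * |g x| ∂μ := habs
    _ ≤ (∫ x, f x ^ 2 ∂μ) ^ (1/(2:ℝ)) * (∫ x, g x ^ 2 ∂μ) ^ (1/(2:ℝ)) := h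
    _ = Real.sqrt (∫ x, f x ^ 2 ∂μ) * Real.sqrt (∫ x, g x ^ 2 ∂μ) := by
        rw [Real.sqrt_eq_rpow, Real.sqrt_eq_rpow]


lemma sqrt_smul_eq (r : ℝ) (hr : 0 ≤ r) : r * Real.exp (-(Real.log r)/2) = Real.sqrt r := by
  rcases eq_or_lt_of_le hr with h | h
  · simp [← h]
  · have h1 : Real.exp (-(Real.log r)/2) = r ^ (-(1:ℝ)/2) := by
      rw [Real.rpow_def_of_pos h]; ring_nf
    rw [h1, Real.sqrt_eq_rpow]
    nth_rewrite 1 [show r = r ^ (1:ℝ) from (Real.rpow_one r).symm]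
    rw [← Real.rpow_add h]
    norm_num

lemma sqrt_le_half_add (r : ℝ) (hr : 0 ≤ r) : Real.sqrt r ≤ (1 + r)/2 := by
  nlinarith [Real.sq_sqrt hr, Real.sqrt_nonneg r, sq_nonneg (Real.sqrt r - 1)]

lemma bc_lower {α : Type*} [MeasurableSpace α] (P Q : Measure α)
    [IsProbabilityMeasure P] [IsProbabilityMeasure Q]
    (hac : P ≪ Q) (hint : Integrable (llr P Q) P) :
    Real.exp (-(∫ x, llr P Q x ∂P)/2) ≤ ∫ x, Real.sqrt ((P.rnDeriv Q x).toReal) ∂Q := by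
  set ρ : α → ℝ := fun x => (P.rnDeriv Q x).toReal with hρ
  have hρmeas : Measurable ρ := (Measure.measurable_rnDeriv P Q).ennreal_toReal
  have hρnn : ∀ x, 0 ≤ ρ x := fun x => ENNReal.toReal_nonneg
  have hρint : Integrable ρ Q := Measure.integrable_toReal_rnDeriv
  have hsqint : Integrable (fun x => Real.sqrt (ρ x)) Q := by
    refine Integrable.mono ((integrable_const (1:ℝ)).add hρint |>.div_const 2)
      (hρmeas.sqrt.aestronglyMeasurable) ?_
    filter_upwards with x
    simp only [Pi.add_apply, Real.norm_eq_abs]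
    rw [abs_of_nonneg (Real.sqrt_nonneg _),
      abs_of_nonneg (by positivity : (0:ℝ) ≤ ((1:ℝ) + ρ x)/2)]
    exact sqrt_le_half_add _ (hρnn x)
  -- pointwise: ρ x * exp(-(llr x)/2) = sqrt (ρ x)
  have hpt : ∀ x, ρ x * Real.exp (-(llr P Q x)/2) = Real.sqrt (ρ x) := by
    intro x
    have : llr P Q x = Real.log (ρ x) := rfl
    rw [this]
    exact sqrt_smul_eq _ (hρnn x)
  have hexpint : Integrable (fun x => Real.exp (-(llr P Q x)/2)) P := by
    rw [← integrable_rnDeriv_smul_iff hac]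
    refine hsqint.congr (Filter.Eventually.of_forall fun x => ?_)
    show Real.sqrt (ρ x) = ρ x • Real.exp (-(llr P Q x)/2)
    rw [smul_eq_mul, hpt x]
  have hjensen : Real.exp (∫ x, -(llr P Q x)/2 ∂P) ≤ ∫ x, Real.exp (-(llr P Q x)/2) ∂P := by
    have h := ConvexOn.map_average_le (μ := P) (f := fun x => -(llr P Q x)/2)
      convexOn_exp Real.continuous_exp.continuousOn isClosed_univ
      (Filter.Eventually.of_forall fun x => Set.mem_univ _)
      ((hint.neg).div_const 2) ?_
    · rwa [average_eq_integral, average_eq_integral] at h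
    · exact hexpint
  have hchg : ∫ x, Real.exp (-(llr P Q x)/2) ∂P = ∫ x, Real.sqrt (ρ x) ∂Q := by
    rw [← integral_rnDeriv_smul hac (f := fun x => Real.exp (-(llr P Q x)/2))]
    exact integral_congr_ae (Filter.Eventually.of_forall fun x => by
      show ρ x • Real.exp (-(llr P Q x)/2) = Real.sqrt (ρ x)
      rw [smul_eq_mul, hpt x])
  have hlin : ∫ x, -(llr P Q x)/2 ∂P = -(∫ x, llr P Q x ∂P)/2 := by
    rw [integral_div, integral_neg]
  rw [← hlin]
  rw [← hchg]
  exact hjensen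


lemma descent {d : ℕ} (ℓ : EuclideanSpace ℝ (Fin d) → ℝ) (L : ℝ)
    (hdiff : Differentiable ℝ ℓ)
    (hlip : ∀ x y, ‖gradient ℓ x - gradient ℓ y‖ ≤ L * ‖x - y‖)
    (w : EuclideanSpace ℝ (Fin d)) (hcrit : gradient ℓ w = 0) (hL : 0 ≤ L)
    (x : EuclideanSpace ℝ (Fin d)) : |ℓ x - ℓ w| ≤ L / 2 * ‖x - w‖ ^ 2 := by
  set v := x - w with hv
  set φ' : ℝ → ℝ := fun t => ⟪gradient ℓ (w + t • v), v⟫ with hφ'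
  have hgcont : Continuous (gradient ℓ) := by
    refine (LipschitzWith.of_dist_le_mul (K := Real.toNNReal L) ?_).continuous
    intro a b
    rw [dist_eq_norm, dist_eq_norm]
    simpa [Real.coe_toNNReal L hL] using hlip a b
  have hDeriv : ∀ t : ℝ, HasDerivAt (fun s : ℝ => ℓ (w + s • v)) (φ' t) t := by
    intro t
    have hc : HasDerivAt (fun s : ℝ => w + s • v) v t := by
      simpa using ((hasDerivAt_id t).smul_const v).const_add w
    have hF := (hdiff (w + t • v)).hasFDerivAt
    have h := hF.comp_hasDerivAt t hc
    have heq : (fderiv ℝ ℓ (w + t • v)) v = φ' t := by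
      show (fderiv ℝ ℓ (w + t • v)) v = ⟪gradient ℓ (w + t • v), v⟫
      have h1 : ⟪gradient ℓ (w + t • v), v⟫
          = (InnerProductSpace.toDual ℝ _) (gradient ℓ (w + t • v)) v := by
        rw [InnerProductSpace.toDual_apply_apply]
      rw [h1]
      have h2 : gradient ℓ (w + t • v)
          = (InnerProductSpace.toDual ℝ _).symm (fderiv ℝ ℓ (w + t • v)) := rfl
      rw [h2, LinearIsometryEquiv.apply_symm_apply]
    rw [← heq]
    exact h
  have hφ'cont : Continuous φ' := by
    apply Continuous.inner
    · exact hgcont.comp (continuous_const.add (continuous_id.smul continuous_const))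
    · exact continuous_const
  have hzero : (fun s : ℝ => ℓ (w + s • v)) 0 = ℓ w := by simp
  have hone : (fun s : ℝ => ℓ (w + s • v)) 1 = ℓ x := by simp [hv]
  have hint : ℓ x - ℓ w = ∫ t in (0:ℝ)..1, φ' t := by
    rw [intervalIntegral.integral_eq_sub_of_hasDerivAt (fun t _ => hDeriv t)
      (hφ'cont.intervalIntegrable 0 1)]
    simp [hv]
  have hbound : ∀ t ∈ Set.uIcc (0:ℝ) 1, |φ' t| ≤ L * ‖v‖^2 * t := by
    intro t ht
    rw [Set.uIcc_of_le (by norm_num : (0:ℝ) ≤ 1)] at ht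
    have h1 : |φ' t| ≤ ‖gradient ℓ (w + t • v)‖ * ‖v‖ := by
      rw [hφ']
      exact (abs_real_inner_le_norm _ _)
    have h2 : ‖gradient ℓ (w + t • v)‖ ≤ L * (t * ‖v‖) := by
      have := hlip (w + t • v) w
      rw [hcrit, sub_zero] at this
      simpa [norm_smul, abs_of_nonneg ht.1] using this
    calc |φ' t| ≤ ‖gradient ℓ (w + t • v)‖ * ‖v‖ := h1
      _ ≤ (L * (t * ‖v‖)) * ‖v‖ := by
          exact mul_le_mul_of_nonneg_right h2 (norm_nonneg _)
      _ = L * ‖v‖^2 * t := by ring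
  have hmain : |∫ t in (0:ℝ)..1, φ' t| ≤ L * ‖v‖^2 / 2 := by
    have hae : ∀ᵐ t ∂(volume.restrict (Set.uIoc (0:ℝ) 1)), ‖φ' t‖ ≤ L * ‖v‖^2 * t := by
      filter_upwards [MeasureTheory.ae_restrict_mem measurableSet_uIoc] with t ht
      have htm : t ∈ Set.uIcc (0:ℝ) 1 := by
        rw [Set.uIoc_of_le (by norm_num : (0:ℝ) ≤ 1)] at ht
        exact Set.mem_uIcc.2 (Or.inl ⟨ht.1.le, ht.2⟩)
      simpa using hbound t htm
    have hgi : IntervalIntegrable (fun t : ℝ => L * ‖v‖^2 * t) volume 0 1 :=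
      ((continuous_const.mul continuous_id).intervalIntegrable 0 1)
    have hle := intervalIntegral.norm_integral_le_abs_of_norm_le hae hgi
    have heval : ∫ t in (0:ℝ)..1, L * ‖v‖^2 * t = L * ‖v‖^2 / 2 := by
      rw [intervalIntegral.integral_const_mul, integral_id]
      ring
    calc |∫ t in (0:ℝ)..1, φ' t| = ‖∫ t in (0:ℝ)..1, φ' t‖ := (Real.norm_eq_abs _).symm
      _ ≤ |∫ t in (0:ℝ)..1, L * ‖v‖^2 * t| := hle
      _ = L * ‖v‖^2 / 2 := by
          rw [heval, abs_of_nonneg (by positivity)]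
  rw [hint]
  calc |∫ t in (0:ℝ)..1, φ' t| ≤ L * ‖v‖^2 / 2 := hmain
    _ = L / 2 * ‖x - w‖^2 := by rw [hv]; ring

lemma mean_bound {E : Type*} [NormedAddCommGroup E] [InnerProductSpace ℝ E] [CompleteSpace E]
    [MeasurableSpace E] (P Q : Measure E)
    [IsProbabilityMeasure P] [IsProbabilityMeasure Q] (hac : P ≪ Q)
    (h1P : Integrable (fun x => x) P) (h1Q : Integrable (fun x => x) Q)
    (mP mQ : E) (hmP : mP = ∫ x, x ∂P) (hmQ : mQ = ∫ x, x ∂Q)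
    (h2P : Integrable (fun x => ‖x - mP‖ ^ 2) P) (h2Q : Integrable (fun x => ‖x - mQ‖ ^ 2) Q)
    {SP SQ : ℝ} (hSP : SP = ∫ x, ‖x - mP‖ ^ 2 ∂P) (hSQ : SQ = ∫ x, ‖x - mQ‖ ^ 2 ∂Q) :
    ‖mP - mQ‖ ^ 2 * (∫ x, Real.sqrt ((P.rnDeriv Q x).toReal) ∂Q) ≤
      ‖mP - mQ‖ * (Real.sqrt SP + Real.sqrt SQ) *
        Real.sqrt (2 * (1 - ∫ x, Real.sqrt ((P.rnDeriv Q x).toReal) ∂Q)) := by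
  set ρ : E → ℝ := fun x => (P.rnDeriv Q x).toReal with hρdef
  set G : E → ℝ := fun x => Real.sqrt (ρ x) with hGdef
  set u : E := mP - mQ with hu
  set BC : ℝ := ∫ x, G x ∂Q with hBCdef
  have hρmeas : Measurable ρ := (Measure.measurable_rnDeriv P Q).ennreal_toReal
  have hρnn : ∀ x, 0 ≤ ρ x := fun x => ENNReal.toReal_nonneg
  have hρint : Integrable ρ Q := Measure.integrable_toReal_rnDeriv
  have hρ1 : ∫ x, ρ x ∂Q = 1 := by
    rw [hρdef]
    rw [Measure.integral_toReal_rnDeriv hac]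
    simp
  have hG2 : ∀ x, G x ^ 2 = ρ x := fun x => Real.sq_sqrt (hρnn x)
  have hGmeas : Measurable G := hρmeas.sqrt
  have hGint : Integrable G Q := by
    refine Integrable.mono ((integrable_const (1:ℝ)).add hρint |>.div_const 2)
      hGmeas.aestronglyMeasurable ?_
    filter_upwards with x
    simp only [Pi.add_apply, Real.norm_eq_abs]
    rw [abs_of_nonneg (Real.sqrt_nonneg _),
      abs_of_nonneg (by positivity : (0:ℝ) ≤ ((1:ℝ) + ρ x)/2)]
    nlinarith [Real.sq_sqrt (hρnn x), Real.sqrt_nonneg (ρ x), sq_nonneg (Real.sqrt (ρ x) - 1)]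
  -- inner products, integrability
  have hiuP : Integrable (fun x => ⟪u, x⟫) P := (innerSL ℝ u).integrable_comp h1P
  have hiuQ : Integrable (fun x => ⟪u, x⟫) Q := (innerSL ℝ u).integrable_comp h1Q
  have hinnP : ∫ x, ⟪u, x⟫ ∂P = ⟪u, mP⟫ := by rw [hmP]; exact integral_inner h1P u
  have hinnQ : ∫ x, ⟪u, x⟫ ∂Q = ⟪u, mQ⟫ := by rw [hmQ]; exact integral_inner h1Q u
  have hxmQ_aesm : AEStronglyMeasurable (fun x => ⟪u, x - mQ⟫) Q :=
    (innerSL ℝ u).continuous.comp_aestronglyMeasurable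
      (h1Q.aestronglyMeasurable.sub aestronglyMeasurable_const)
  have hxmP_aesmQ : AEStronglyMeasurable (fun x => ⟪u, x - mP⟫) Q :=
    (innerSL ℝ u).continuous.comp_aestronglyMeasurable
      (h1Q.aestronglyMeasurable.sub aestronglyMeasurable_const)
  have hxmP_aesmP : AEStronglyMeasurable (fun x => ⟪u, x - mP⟫) P :=
    (innerSL ℝ u).continuous.comp_aestronglyMeasurable
      (h1P.aestronglyMeasurable.sub aestronglyMeasurable_const)
  have hinner_sq : ∀ (m x : E), ⟪u, x - m⟫ ^ 2 ≤ ‖u‖^2 * ‖x - m‖^2 := by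
    intro m x
    have h := abs_real_inner_le_norm u (x - m)
    calc ⟪u, x - m⟫ ^ 2 = |⟪u, x - m⟫|^2 := (sq_abs _).symm
      _ ≤ (‖u‖ * ‖x - m‖)^2 := by
          apply sq_le_sq' <;> nlinarith [abs_nonneg ⟪u, x - m⟫, norm_nonneg u, norm_nonneg (x-m)]
      _ = ‖u‖^2 * ‖x - m‖^2 := by ring
  have hiu2Q : Integrable (fun x => ⟪u, x - mQ⟫ ^ 2) Q := by
    refine Integrable.mono (h2Q.const_mul (‖u‖^2)) (hxmQ_aesm.pow 2) ?_
    filter_upwards with x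
    rw [Real.norm_eq_abs, abs_of_nonneg (sq_nonneg _), Real.norm_eq_abs,
      abs_of_nonneg (by positivity : (0:ℝ) ≤ ‖u‖^2 * ‖x - mQ‖^2)]
    exact hinner_sq mQ x
  have hiu2P : Integrable (fun x => ⟪u, x - mP⟫ ^ 2) P := by
    refine Integrable.mono (h2P.const_mul (‖u‖^2)) (hxmP_aesmP.pow 2) ?_
    filter_upwards with x
    rw [Real.norm_eq_abs, abs_of_nonneg (sq_nonneg _), Real.norm_eq_abs,
      abs_of_nonneg (by positivity : (0:ℝ) ≤ ‖u‖^2 * ‖x - mP‖^2)]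
    exact hinner_sq mP x
  -- change of variables pieces
  have hρuQ : Integrable (fun x => ρ x * ⟪u, x⟫) Q := by
    have := (integrable_rnDeriv_smul_iff hac (f := fun x => ⟪u, x⟫)).2 hiuP
    exact this.congr (Filter.Eventually.of_forall fun x => by simp [smul_eq_mul, hρdef])
  have hρuint : ∫ x, ρ x * ⟪u, x⟫ ∂Q = ⟪u, mP⟫ := by
    rw [← hinnP, ← integral_rnDeriv_smul hac (f := fun x => ⟪u, x⟫)]
    exact integral_congr_ae (Filter.Eventually.of_forall fun x => by simp [smul_eq_mul, hρdef])
  have hρsqQ : Integrable (fun x => ρ x * ⟪u, x - mP⟫ ^ 2) Q := by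
    have := (integrable_rnDeriv_smul_iff hac (f := fun x => ⟪u, x - mP⟫ ^ 2)).2 hiu2P
    exact this.congr (Filter.Eventually.of_forall fun x => by simp [smul_eq_mul, hρdef])
  have hρsqint : ∫ x, ρ x * ⟪u, x - mP⟫ ^ 2 ∂Q = ∫ x, ⟪u, x - mP⟫ ^ 2 ∂P := by
    rw [← integral_rnDeriv_smul hac (f := fun x => ⟪u, x - mP⟫ ^ 2)]
    exact integral_congr_ae (Filter.Eventually.of_forall fun x => by simp [smul_eq_mul, hρdef])
  -- integrability of G * ⟪u,x⟫
  have hxaesmQ : AEStronglyMeasurable (fun x => ⟪u, x⟫) Q :=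
    (innerSL ℝ u).continuous.comp_aestronglyMeasurable h1Q.aestronglyMeasurable
  have hiu2Q' : Integrable (fun x => ⟪u, x⟫ ^ 2) Q := by
    refine Integrable.mono ((hiu2Q.const_mul 2).add (integrable_const (2 * ⟪u, mQ⟫^2)))
      (hxaesmQ.pow 2) ?_
    filter_upwards with x
    simp only [Pi.add_apply, Real.norm_eq_abs]
    rw [abs_of_nonneg (sq_nonneg _)]
    have hsplit : ⟪u, x - mQ⟫ = ⟪u, x⟫ - ⟪u, mQ⟫ := inner_sub_right u x mQ
    have habs : |2 * ⟪u, x - mQ⟫ ^ 2 + 2 * ⟪u, mQ⟫ ^ 2| = 2 * ⟪u, x - mQ⟫ ^ 2 + 2 * ⟪u, mQ⟫ ^ 2 :=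
      abs_of_nonneg (by positivity)
    rw [habs, show ⟪u, x⟫ = ⟪u, x - mQ⟫ + ⟪u, mQ⟫ by rw [hsplit]; ring]
    nlinarith [sq_nonneg (⟪u, x - mQ⟫ - ⟪u, mQ⟫)]
  have hGu : Integrable (fun x => G x * ⟪u, x⟫) Q := by
    refine integrable_mul_of_sq_s4 hGmeas.aestronglyMeasurable hxaesmQ ?_ hiu2Q'
    exact hρint.congr (Filter.Eventually.of_forall fun x => (hG2 x).symm)
  set IG : ℝ := ∫ x, G x * ⟪u, x⟫ ∂Q with hIGdef
  -- the two key integrals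
  set J : ℝ := ∫ x, (G x * ⟪u, x - mP⟫) * (G x - 1) ∂Q with hJdef
  set K : ℝ := ∫ x, ⟪u, x - mQ⟫ * (G x - 1) ∂Q with hKdef
  have hJval : J = (⟪u, mP⟫ - IG) - ⟪u, mP⟫ * (1 - BC) := by
    have hpt : ∀ x, (G x * ⟪u, x - mP⟫) * (G x - 1)
        = (ρ x * ⟪u, x⟫ - G x * ⟪u, x⟫) - ⟪u, mP⟫ * (ρ x - G x) := by
      intro x
      rw [inner_sub_right, ← hG2 x]
      ring
    have hint1 : Integrable (fun x => ρ x * ⟪u, x⟫ - G x * ⟪u, x⟫) Q := hρuQ.sub hGu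
    have hint2 : Integrable (fun x => ⟪u, mP⟫ * (ρ x - G x)) Q := (hρint.sub hGint).const_mul _
    have hint3 : Integrable (fun x => ρ x - G x) Q := hρint.sub hGint
    rw [hJdef, integral_congr_ae (Filter.Eventually.of_forall hpt), integral_sub hint1 hint2,
      integral_sub hρuQ hGu, integral_const_mul, integral_sub hρint hGint, hρuint, hρ1,
      ← hBCdef, ← hIGdef]
  have hKval : K = (IG - ⟪u, mQ⟫) - ⟪u, mQ⟫ * (BC - 1) := by
    have hpt : ∀ x, ⟪u, x - mQ⟫ * (G x - 1)
        = (G x * ⟪u, x⟫ - ⟪u, x⟫) - ⟪u, mQ⟫ * (G x - 1) := by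
      intro x
      rw [inner_sub_right]
      ring
    have hint1 : Integrable (fun x => G x * ⟪u, x⟫ - ⟪u, x⟫) Q := hGu.sub hiuQ
    have hint2 : Integrable (fun x => ⟪u, mQ⟫ * (G x - 1)) Q :=
      (hGint.sub (integrable_const 1)).const_mul _
    rw [hKdef, integral_congr_ae (Filter.Eventually.of_forall hpt), integral_sub hint1 hint2,
      integral_sub hGu hiuQ, integral_const_mul, integral_sub hGint (integrable_const 1),
      hinnQ, ← hBCdef, ← hIGdef]
    simp
  have hJK : J + K = ‖u‖^2 * BC := by
    have h1 : ⟪u, mP⟫ - ⟪u, mQ⟫ = ‖u‖^2 := by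
      rw [← inner_sub_right, ← hu, real_inner_self_eq_norm_sq]
    linear_combination hJval + hKval + h1 * BC
  -- Cauchy-Schwarz bounds
  have hg_aesm : AEStronglyMeasurable (fun x => G x - 1) Q :=
    hGmeas.aestronglyMeasurable.sub aestronglyMeasurable_const
  have hg2int : Integrable (fun x => (G x - 1)^2) Q := by
    refine ((hρint.sub (hGint.const_mul 2)).add (integrable_const 1)).congr
      (Filter.Eventually.of_forall fun x => ?_)
    simp only [Pi.add_apply, Pi.sub_apply]
    rw [← hG2 x]; ring
  have hg2val : ∫ x, (G x - 1)^2 ∂Q = 2 * (1 - BC) := by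
    have hpt : ∀ x, (G x - 1)^2 = (ρ x - 2 * G x) + 1 := by
      intro x; rw [← hG2 x]; ring
    have hint1 : Integrable (fun x => ρ x - 2 * G x) Q := hρint.sub (hGint.const_mul 2)
    have hint2 : Integrable (fun x => 2 * G x) Q := hGint.const_mul 2
    rw [integral_congr_ae (Filter.Eventually.of_forall hpt), integral_add hint1
      (integrable_const 1), integral_sub hρint hint2, integral_const_mul, hρ1, ← hBCdef]
    simp only [integral_const, probReal_univ, smul_eq_mul, one_mul]
    ring
  have hSPnn : 0 ≤ SP := hSP ▸ integral_nonneg fun x => sq_nonneg _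
  have hSQnn : 0 ≤ SQ := hSQ ▸ integral_nonneg fun x => sq_nonneg _
  have hJbound : J ≤ ‖u‖ * Real.sqrt SP * Real.sqrt (2 * (1 - BC)) := by
    have hf_aesm : AEStronglyMeasurable (fun x => G x * ⟪u, x - mP⟫) Q :=
      hGmeas.aestronglyMeasurable.mul hxmP_aesmQ
    have hf2 : Integrable (fun x => (G x * ⟪u, x - mP⟫)^2) Q := by
      refine hρsqQ.congr (Filter.Eventually.of_forall fun x => ?_)
      show ρ x * ⟪u, x - mP⟫^2 = (G x * ⟪u, x - mP⟫)^2
      rw [← hG2 x]; ring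
    have hcs := cs_integral Q hf_aesm hg_aesm hf2 hg2int
    have hf2val : ∫ x, (G x * ⟪u, x - mP⟫)^2 ∂Q ≤ ‖u‖^2 * SP := by
      have he : ∫ x, (G x * ⟪u, x - mP⟫)^2 ∂Q = ∫ x, ρ x * ⟪u, x - mP⟫^2 ∂Q := by
        refine integral_congr_ae (Filter.Eventually.of_forall fun x => ?_)
        show (G x * ⟪u, x - mP⟫)^2 = ρ x * ⟪u, x - mP⟫^2
        rw [← hG2 x]; ring
      rw [he, hρsqint, hSP]
      calc ∫ x, ⟪u, x - mP⟫^2 ∂P ≤ ∫ x, ‖u‖^2 * ‖x - mP‖^2 ∂P :=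
            integral_mono hiu2P (h2P.const_mul _) (fun x => hinner_sq mP x)
        _ = ‖u‖^2 * ∫ x, ‖x - mP‖^2 ∂P := integral_const_mul _ _
    have hsq : Real.sqrt (∫ x, (G x * ⟪u, x - mP⟫)^2 ∂Q) ≤ ‖u‖ * Real.sqrt SP := by
      calc Real.sqrt (∫ x, (G x * ⟪u, x - mP⟫)^2 ∂Q) ≤ Real.sqrt (‖u‖^2 * SP) :=
            Real.sqrt_le_sqrt hf2val
        _ = ‖u‖ * Real.sqrt SP := by
            rw [Real.sqrt_mul (sq_nonneg _), Real.sqrt_sq (norm_nonneg _)]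
    rw [hg2val] at hcs
    calc J ≤ Real.sqrt (∫ x, (G x * ⟪u, x - mP⟫)^2 ∂Q) * Real.sqrt (2 * (1 - BC)) := hcs
      _ ≤ ‖u‖ * Real.sqrt SP * Real.sqrt (2 * (1 - BC)) :=
          mul_le_mul_of_nonneg_right hsq (Real.sqrt_nonneg _)
  have hKbound : K ≤ ‖u‖ * Real.sqrt SQ * Real.sqrt (2 * (1 - BC)) := by
    have hcs := cs_integral Q hxmQ_aesm hg_aesm hiu2Q hg2int
    have hf2val : ∫ x, ⟪u, x - mQ⟫^2 ∂Q ≤ ‖u‖^2 * SQ := by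
      rw [hSQ]
      calc ∫ x, ⟪u, x - mQ⟫^2 ∂Q ≤ ∫ x, ‖u‖^2 * ‖x - mQ‖^2 ∂Q :=
            integral_mono hiu2Q (h2Q.const_mul _) (fun x => hinner_sq mQ x)
        _ = ‖u‖^2 * ∫ x, ‖x - mQ‖^2 ∂Q := integral_const_mul _ _
    have hsq : Real.sqrt (∫ x, ⟪u, x - mQ⟫^2 ∂Q) ≤ ‖u‖ * Real.sqrt SQ := by
      calc Real.sqrt (∫ x, ⟪u, x - mQ⟫^2 ∂Q) ≤ Real.sqrt (‖u‖^2 * SQ) :=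
            Real.sqrt_le_sqrt hf2val
        _ = ‖u‖ * Real.sqrt SQ := by
            rw [Real.sqrt_mul (sq_nonneg _), Real.sqrt_sq (norm_nonneg _)]
    rw [hg2val] at hcs
    calc K ≤ Real.sqrt (∫ x, ⟪u, x - mQ⟫^2 ∂Q) * Real.sqrt (2 * (1 - BC)) := hcs
      _ ≤ ‖u‖ * Real.sqrt SQ * Real.sqrt (2 * (1 - BC)) :=
          mul_le_mul_of_nonneg_right hsq (Real.sqrt_nonneg _)
  -- conclude
  show ‖u‖^2 * BC ≤ ‖u‖ * (Real.sqrt SP + Real.sqrt SQ) * Real.sqrt (2 * (1 - BC))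
  calc ‖u‖^2 * BC = J + K := hJK.symm
    _ ≤ ‖u‖ * Real.sqrt SP * Real.sqrt (2 * (1 - BC))
        + ‖u‖ * Real.sqrt SQ * Real.sqrt (2 * (1 - BC)) := add_le_add hJbound hKbound
    _ = ‖u‖ * (Real.sqrt SP + Real.sqrt SQ) * Real.sqrt (2 * (1 - BC)) := by ring

lemma bc_le_one {α : Type*} [MeasurableSpace α] (P Q : Measure α)
    [IsProbabilityMeasure P] [IsProbabilityMeasure Q] (hac : P ≪ Q) :
    ∫ x, Real.sqrt ((P.rnDeriv Q x).toReal) ∂Q ≤ 1 := by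
  set ρ : α → ℝ := fun x => (P.rnDeriv Q x).toReal with hρdef
  have hρnn : ∀ x, 0 ≤ ρ x := fun x => ENNReal.toReal_nonneg
  have hρint : Integrable ρ Q := Measure.integrable_toReal_rnDeriv
  have hρ1 : ∫ x, ρ x ∂Q = 1 := by
    rw [hρdef, Measure.integral_toReal_rnDeriv hac]; simp
  have hGmeas : Measurable (fun x => Real.sqrt (ρ x)) :=
    ((Measure.measurable_rnDeriv P Q).ennreal_toReal).sqrt
  have hG2 : Integrable (fun x => Real.sqrt (ρ x) ^ 2) Q :=
    hρint.congr (Filter.Eventually.of_forall fun x => (Real.sq_sqrt (hρnn x)).symm)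
  have h := cs_integral Q hGmeas.aestronglyMeasurable
    (aestronglyMeasurable_const (b := (1:ℝ))) hG2
    (by simpa using (integrable_const (1:ℝ)))
  simp only [mul_one, one_pow] at h
  calc ∫ x, Real.sqrt (ρ x) ∂Q
      ≤ Real.sqrt (∫ x, Real.sqrt (ρ x) ^ 2 ∂Q) * Real.sqrt (∫ (_ : α), (1:ℝ) ∂Q) := h
    _ = 1 := by
        rw [integral_congr_ae (Filter.Eventually.of_forall fun x => Real.sq_sqrt (hρnn x)), hρ1]
        simp

lemma step3_arith (L C B a t2 : ℝ) (hL : 0 ≤ L) (hC : 0 ≤ C) (hBpos : 0 < B)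
    (h1a : 0 < 1 - a) (ha0 : 0 ≤ a)
    (hkey : 2*(1-B)*(1-a) ≤ a*B^2) (hsq2 : t2 * B^2 ≤ 4*C*(1-B)) :
    L/2 * t2 ≤ L * C * a / (1-a) := by
  have hB2 : (0:ℝ) < B^2 := pow_pos hBpos 2
  have ht2 : t2 ≤ 4*C*(1-B)/B^2 := by
    rw [le_div_iff₀ hB2]; exact hsq2
  have h5 : L/2 * t2 ≤ L/2 * (4*C*(1-B)/B^2) :=
    mul_le_mul_of_nonneg_left ht2 (by linarith)
  have h6 : L/2 * (4*C*(1-B)/B^2) ≤ L * C * a / (1-a) := by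
    rw [show L/2 * (4*C*(1-B)/B^2) = (2*L*C*(1-B))/B^2 by ring,
      div_le_div_iff₀ hB2 h1a]
    nlinarith [mul_le_mul_of_nonneg_left hkey (mul_nonneg hL hC)]
  linarith

/-- **Lemma 3.1.** If the latent distributions `P, Q` (whose mean vectors are the
optimal weights `ω*` and `ω̃*` of a trained network and its trained sparse version)
satisfy the AP3 bound `KL(P‖Q) ≤ ε` with `0 ≤ ε < 2`, and the loss `ℓ` is
differentiable with `L`-Lipschitz gradient and critical at `ω̃*`, then the
performance difference satisfies
`|E[Y·ℓ(ω*)] - E[Y·ℓ(ω̃*)]| ≤ E[|Y|] · L · C · √(ε/2) / (1 - √(ε/2))`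
where `C = S_P + S_Q` is the sum of the second central moments. -/
theorem performance_difference_bound {d : ℕ}
    {Ω : Type*} [MeasurableSpace Ω] (μ : Measure Ω) [IsProbabilityMeasure μ]
    (Y : Ω → ℝ) (hY : Integrable Y μ)
    (ℓ : EuclideanSpace ℝ (Fin d) → ℝ) (L : ℝ)
    (hdiff : Differentiable ℝ ℓ)
    (hlip : ∀ x y, ‖gradient ℓ x - gradient ℓ y‖ ≤ L * ‖x - y‖)
    (ωstar ωtstar : EuclideanSpace ℝ (Fin d))
    (hcrit : gradient ℓ ωtstar = 0)
    (P Q : Measure (EuclideanSpace ℝ (Fin d)))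
    [IsProbabilityMeasure P] [IsProbabilityMeasure Q]
    (h1P : Integrable (fun x => x) P) (h1Q : Integrable (fun x => x) Q)
    (hmP : ωstar = ∫ x, x ∂P) (hmQ : ωtstar = ∫ x, x ∂Q)
    (h2P : Integrable (fun x => ‖x - ωstar‖ ^ 2) P)
    (h2Q : Integrable (fun x => ‖x - ωtstar‖ ^ 2) Q)
    (SP SQ C : ℝ)
    (hSP : SP = ∫ x, ‖x - ωstar‖ ^ 2 ∂P)
    (hSQ : SQ = ∫ x, ‖x - ωtstar‖ ^ 2 ∂Q)
    (hC : C = SP + SQ)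
    (ε : ℝ) (hε0 : 0 ≤ ε) (hε2 : ε < 2)
    (hKL : klDiv P Q ≤ ((ε : ℝ) : EReal)) :
    |(∫ ω', Y ω' * ℓ ωstar ∂μ) - ∫ ω', Y ω' * ℓ ωtstar ∂μ| ≤
      (∫ ω', |Y ω'| ∂μ) * L * C * Real.sqrt (ε / 2) / (1 - Real.sqrt (ε / 2)) := by
  -- extract KL data
  rw [klDiv] at hKL
  split_ifs at hKL with hcond
  swap
  · exact absurd (lt_of_le_of_lt hKL (EReal.coe_lt_top ε)) (lt_irrefl _)
  obtain ⟨hac, hllr⟩ := hcond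
  have hKLr : ∫ x, llr P Q x ∂P ≤ ε := by exact_mod_cast hKL
  set a : ℝ := Real.sqrt (ε / 2) with hadef
  have ha0 : 0 ≤ a := Real.sqrt_nonneg _
  have ha1 : a < 1 := by
    rw [hadef, show (1:ℝ) = Real.sqrt 1 by simp]
    exact Real.sqrt_lt_sqrt (by linarith) (by linarith)
  have ha2 : a ^ 2 = ε / 2 := Real.sq_sqrt (by linarith)
  have h1apos : (0:ℝ) < 1 - a := by linarith
  have hSPnn : 0 ≤ SP := hSP ▸ integral_nonneg fun x => sq_nonneg _
  have hSQnn : 0 ≤ SQ := hSQ ▸ integral_nonneg fun x => sq_nonneg _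
  have hCnn : 0 ≤ C := by rw [hC]; linarith
  -- trivial space case
  by_cases htriv : ∀ x y : EuclideanSpace ℝ (Fin d), x = y
  · have h0 : ωstar = ωtstar := htriv _ _
    have hSP0 : SP = 0 := by
      have hz : ∀ x : EuclideanSpace ℝ (Fin d), ‖x - ωstar‖ ^ 2 = (0:ℝ) := fun x => by
        rw [htriv x ωstar]; simp
      rw [hSP, integral_congr_ae (Filter.Eventually.of_forall hz)]
      simp
    have hSQ0 : SQ = 0 := by
      have hz : ∀ x : EuclideanSpace ℝ (Fin d), ‖x - ωtstar‖ ^ 2 = (0:ℝ) := fun x => by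
        rw [htriv x ωtstar]; simp
      rw [hSQ, integral_congr_ae (Filter.Eventually.of_forall hz)]
      simp
    rw [h0, sub_self, abs_zero, hC, hSP0, hSQ0]
    norm_num
  push_neg at htriv
  obtain ⟨x0, y0, hxy⟩ := htriv
  have hnormpos : 0 < ‖x0 - y0‖ := by
    rw [norm_pos_iff]
    exact sub_ne_zero.mpr hxy
  have hL : 0 ≤ L := by
    nlinarith [hlip x0 y0, norm_nonneg (gradient ℓ x0 - gradient ℓ y0)]
  -- Bhattacharyya coefficient
  set BC : ℝ := ∫ x, Real.sqrt ((P.rnDeriv Q x).toReal) ∂Q with hBCdef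
  have hBClow : Real.exp (-(ε/2)) ≤ BC := by
    calc Real.exp (-(ε/2)) ≤ Real.exp (-(∫ x, llr P Q x ∂P)/2) :=
          Real.exp_le_exp.2 (by linarith)
      _ ≤ BC := bc_lower P Q hac hllr
  have hBC1 : BC ≤ 1 := bc_le_one P Q hac
  have hBCpos : 0 < BC := lt_of_lt_of_le (Real.exp_pos _) hBClow
  have hbnn : 0 ≤ 1 - BC := by linarith
  have hkey : 2*(1-BC)*(1-a) ≤ a*BC^2 := by
    refine scalar_key a BC ha0 ha1 hBC1 ?_
    rw [ha2]
    exact hBClow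
  -- mean bound
  set t : ℝ := ‖ωstar - ωtstar‖ with htdef
  have ht0 : 0 ≤ t := norm_nonneg _
  have hmean := mean_bound P Q hac h1P h1Q ωstar ωtstar hmP hmQ h2P h2Q hSP hSQ
  have hsplit : Real.sqrt SP + Real.sqrt SQ ≤ Real.sqrt (2*C) := by
    have hsq : (Real.sqrt SP + Real.sqrt SQ)^2 ≤ 2*C := by
      rw [hC]
      nlinarith [Real.sq_sqrt hSPnn, Real.sq_sqrt hSQnn, sq_nonneg (Real.sqrt SP - Real.sqrt SQ),
        Real.sqrt_nonneg SP, Real.sqrt_nonneg SQ]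
    calc Real.sqrt SP + Real.sqrt SQ
        = Real.sqrt ((Real.sqrt SP + Real.sqrt SQ)^2) :=
          (Real.sqrt_sq (by positivity)).symm
      _ ≤ Real.sqrt (2*C) := Real.sqrt_le_sqrt hsq
  have hmean2 : t^2 * BC ≤ t * Real.sqrt (2*C) * Real.sqrt (2*(1-BC)) := by
    calc t^2 * BC ≤ t * (Real.sqrt SP + Real.sqrt SQ) * Real.sqrt (2*(1-BC)) := hmean
      _ ≤ t * Real.sqrt (2*C) * Real.sqrt (2*(1-BC)) := by
          apply mul_le_mul_of_nonneg_right _ (Real.sqrt_nonneg _)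
          exact mul_le_mul_of_nonneg_left hsplit ht0
  clear_value a t BC
  -- performance difference of losses
  have hdelta : |ℓ ωstar - ℓ ωtstar| ≤ L/2 * t^2 := by
    rw [htdef]
    exact descent ℓ L hdiff hlip ωtstar hcrit hL ωstar
  have hfinal : |ℓ ωstar - ℓ ωtstar| ≤ L * C * a / (1-a) := by
    rcases eq_or_lt_of_le ht0 with h | htpos
    · have : t^2 = 0 := by rw [← h]; ring
      have h1 : |ℓ ωstar - ℓ ωtstar| ≤ 0 := by
        calc |ℓ ωstar - ℓ ωtstar| ≤ L/2 * t^2 := hdelta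
          _ = 0 := by rw [this]; ring
      have h2 : 0 ≤ L * C * a / (1-a) :=
        div_nonneg (mul_nonneg (mul_nonneg hL hCnn) ha0) (le_of_lt h1apos)
      linarith
    · have hstep1 : t * BC ≤ Real.sqrt (2*C) * Real.sqrt (2*(1-BC)) := by
        have := hmean2
        rw [show t^2 * BC = t * (t * BC) by ring,
          show t * Real.sqrt (2*C) * Real.sqrt (2*(1-BC))
            = t * (Real.sqrt (2*C) * Real.sqrt (2*(1-BC))) by ring] at this
        exact le_of_mul_le_mul_left this htpos
      have hD2 : (Real.sqrt (2*C) * Real.sqrt (2*(1-BC)))^2 = 4*C*(1-BC) := by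
        rw [mul_pow, Real.sq_sqrt (by linarith), Real.sq_sqrt (by linarith)]
        ring
      have hsq2 : t^2 * BC^2 ≤ 4*C*(1-BC) := by
        have h := mul_self_le_mul_self (mul_nonneg ht0 (le_of_lt hBCpos)) hstep1
        calc t^2 * BC^2 = (t*BC) * (t*BC) := by ring
          _ ≤ (Real.sqrt (2*C) * Real.sqrt (2*(1-BC))) * (Real.sqrt (2*C) * Real.sqrt (2*(1-BC))) := h
          _ = 4*C*(1-BC) := by rw [← hD2]; ring
      have hstep3 : L/2 * t^2 ≤ L * C * a / (1-a) :=
        step3_arith L C BC a (t^2) hL hCnn hBCpos h1apos ha0 hkey hsq2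
      calc |ℓ ωstar - ℓ ωtstar| ≤ L/2 * t^2 := hdelta
        _ ≤ L * C * a / (1-a) := hstep3
  -- assemble
  have hLHS : (∫ ω', Y ω' * ℓ ωstar ∂μ) - ∫ ω', Y ω' * ℓ ωtstar ∂μ
      = (∫ ω', Y ω' ∂μ) * (ℓ ωstar - ℓ ωtstar) := by
    rw [integral_mul_const, integral_mul_const]
    ring
  rw [hLHS, abs_mul]
  have hYabs : |∫ ω', Y ω' ∂μ| ≤ ∫ ω', |Y ω'| ∂μ := by
    have := norm_integral_le_integral_norm (μ := μ) Y
    simpa [Real.norm_eq_abs] using this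
  have hYnn : 0 ≤ ∫ ω', |Y ω'| ∂μ := integral_nonneg fun ω' => abs_nonneg _
  calc |∫ ω', Y ω' ∂μ| * |ℓ ωstar - ℓ ωtstar|
      ≤ (∫ ω', |Y ω'| ∂μ) * |ℓ ωstar - ℓ ωtstar| :=
        mul_le_mul_of_nonneg_right hYabs (abs_nonneg _)
    _ ≤ (∫ ω', |Y ω'| ∂μ) * (L * C * a / (1-a)) :=
        mul_le_mul_of_nonneg_left hfinal hYnn
    _ = (∫ ω', |Y ω'| ∂μ) * L * C * a / (1-a) := by ring
end

section
/- Let μ be a measure on a measurable space Z and let p, q be nonnegative measurable functions with ∫ p dμ = ∫ q dμ = 1 and q > 0 μ-almost everywhere. Suppose there are constants C ≥ 0, B ≥ 0 and vectors v, ṽ ∈ ℝ^k such that |p(z) − q(z)| ≤ C·‖v − ṽ‖ for μ-almost every z ∈ Z, and ∫ (1/q) dμ ≤ B. Then the Kullback–Leibler divergence satisfies ∫ p · log(p/q) dμ ≤ C² · B · ‖v − ṽ‖². -/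
open MeasureTheory
open scoped ENNReal

/-- Extended-real integral of a real function: `∫ f⁺ - ∫ f⁻` computed in `EReal`. -/
noncomputable def eIntegral {α : Type*} [MeasurableSpace α] (μ : Measure α)
    (f : α → ℝ) : EReal :=
  ((∫⁻ x, ENNReal.ofReal (f x) ∂μ : ℝ≥0∞) : EReal) -
    ((∫⁻ x, ENNReal.ofReal (-f x) ∂μ : ℝ≥0∞) : EReal)

/-- **Core mechanism of Lemma 3.3.** Let `p, q` be probability densities w.r.t. `μ`
with `q > 0` a.e. If `|p(z) - q(z)| ≤ C ‖v - ṽ‖` for a.e. `z` and `∫ (1/q) dμ ≤ B`,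
then the Kullback–Leibler divergence satisfies
`∫ p log(p/q) dμ ≤ C² B ‖v - ṽ‖²`. -/
theorem klDiv_le_of_lipschitz_density {α : Type*} [MeasurableSpace α] (μ : Measure α)
    {k : ℕ} (p q : α → ℝ) (hp : Measurable p) (hq : Measurable q)
    (hp0 : ∀ x, 0 ≤ p x) (hq0 : ∀ x, 0 ≤ q x)
    (hpint : ∫⁻ x, ENNReal.ofReal (p x) ∂μ = 1)
    (hqint : ∫⁻ x, ENNReal.ofReal (q x) ∂μ = 1)
    (hqpos : ∀ᵐ x ∂μ, 0 < q x)
    (C B : ℝ) (hC : 0 ≤ C) (hB : 0 ≤ B)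
    (v vt : EuclideanSpace ℝ (Fin k))
    (hlip : ∀ᵐ z ∂μ, |p z - q z| ≤ C * ‖v - vt‖)
    (hinvq : ∫⁻ x, ENNReal.ofReal (1 / q x) ∂μ ≤ ENNReal.ofReal B) :
    eIntegral μ (fun x => p x * Real.log (p x / q x)) ≤
      ((C ^ 2 * B * ‖v - vt‖ ^ 2 : ℝ) : EReal) := by
  classical
  set a : ℝ := C * ‖v - vt‖ with ha_def
  have ha : 0 ≤ a := mul_nonneg hC (norm_nonneg _)
  set f : α → ℝ := fun x => p x * Real.log (p x / q x) with hf_def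
  set g : α → ℝ := fun x => (p x - q x) ^ 2 / q x with hg_def
  set h : α → ℝ := fun x => p x - q x with hh_def
  have hg0 : ∀ x, 0 ≤ g x := fun x => div_nonneg (sq_nonneg _) (hq0 x)
  have hgmeas : Measurable g := ((hp.sub hq).pow_const 2).div hq
  have hfmeas : Measurable f := hp.mul (Real.measurable_log.comp (hp.div hq))
  -- lintegral bound on g
  have hglint : ∫⁻ x, ENNReal.ofReal (g x) ∂μ ≤ ENNReal.ofReal (a ^ 2 * B) := by
    have hle : ∀ᵐ x ∂μ, ENNReal.ofReal (g x) ≤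
        ENNReal.ofReal (a ^ 2) * ENNReal.ofReal (1 / q x) := by
      filter_upwards [hqpos, hlip] with x hx hl
      rw [← ENNReal.ofReal_mul (sq_nonneg a)]
      apply ENNReal.ofReal_le_ofReal
      rw [mul_one_div]
      apply div_le_div_of_nonneg_right ?_ hx.le
      calc (p x - q x) ^ 2 = |p x - q x| ^ 2 := (sq_abs _).symm
        _ ≤ a ^ 2 := pow_le_pow_left₀ (abs_nonneg _) hl 2
    calc ∫⁻ x, ENNReal.ofReal (g x) ∂μ
        ≤ ∫⁻ x, ENNReal.ofReal (a ^ 2) * ENNReal.ofReal (1 / q x) ∂μ :=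
          lintegral_mono_ae hle
      _ = ENNReal.ofReal (a ^ 2) * ∫⁻ x, ENNReal.ofReal (1 / q x) ∂μ :=
          lintegral_const_mul _ (ENNReal.measurable_ofReal.comp
            (measurable_const.div hq))
      _ ≤ ENNReal.ofReal (a ^ 2) * ENNReal.ofReal B := by gcongr
      _ = ENNReal.ofReal (a ^ 2 * B) := (ENNReal.ofReal_mul (sq_nonneg a)).symm
  -- integrability facts
  have hpInt : Integrable p μ := by
    refine ⟨hp.aestronglyMeasurable, ?_⟩
    rw [hasFiniteIntegral_iff_ofReal (Filter.Eventually.of_forall hp0)]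
    simp [hpint]
  have hqInt : Integrable q μ := by
    refine ⟨hq.aestronglyMeasurable, ?_⟩
    rw [hasFiniteIntegral_iff_ofReal (Filter.Eventually.of_forall hq0)]
    simp [hqint]
  have hgInt : Integrable g μ := by
    refine ⟨hgmeas.aestronglyMeasurable, ?_⟩
    rw [hasFiniteIntegral_iff_ofReal (Filter.Eventually.of_forall hg0)]
    exact lt_of_le_of_lt hglint ENNReal.ofReal_lt_top
  have hhInt : Integrable h μ := hpInt.sub hqInt
  -- pointwise a.e. bounds on f
  have hupper : ∀ᵐ x ∂μ, f x ≤ g x + h x := by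
    filter_upwards [hqpos] with x hx
    have hqne : q x ≠ 0 := ne_of_gt hx
    rcases eq_or_lt_of_le (hp0 x) with hpx | hpx
    · have hpz : p x = 0 := hpx.symm
      have e1 : f x = 0 := by simp [hf_def, hpz]
      have e2 : g x = q x := by
        simp only [hg_def, hpz]
        rw [zero_sub, neg_sq, sq, mul_div_assoc, div_self hqne, mul_one]
      have e3 : h x = -q x := by simp [hh_def, hpz]
      rw [e1, e2, e3]; ring_nf; rfl
    · have ht : 0 < p x / q x := div_pos hpx hx
      have hlog : Real.log (p x / q x) ≤ p x / q x - 1 :=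
        Real.log_le_sub_one_of_pos ht
      have h1 : f x ≤ p x * (p x / q x - 1) :=
        mul_le_mul_of_nonneg_left hlog (hp0 x)
      have h2 : p x * (p x / q x - 1) = g x + h x := by
        simp only [hg_def, hh_def]
        field_simp
        ring
      exact h1.trans (le_of_eq h2)
  have hlower : ∀ᵐ x ∂μ, h x ≤ f x := by
    filter_upwards [hqpos] with x hx
    have hqne : q x ≠ 0 := ne_of_gt hx
    rcases eq_or_lt_of_le (hp0 x) with hpx | hpx
    · have : p x = 0 := hpx.symm
      simp only [hf_def, hh_def, this, zero_mul, zero_sub]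
      linarith [hx.le]
    · have hpne : p x ≠ 0 := ne_of_gt hpx
      have ht : 0 < q x / p x := div_pos hx hpx
      have hlog : Real.log (q x / p x) ≤ q x / p x - 1 :=
        Real.log_le_sub_one_of_pos ht
      have hrw : Real.log (p x / q x) = -Real.log (q x / p x) := by
        rw [← Real.log_inv, inv_div]
      have h1 : 1 - q x / p x ≤ Real.log (p x / q x) := by
        rw [hrw]; linarith
      have h2 : p x * (1 - q x / p x) ≤ f x :=
        mul_le_mul_of_nonneg_left h1 (hp0 x)
      have h3 : p x * (1 - q x / p x) = h x := by
        simp only [hh_def]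
        field_simp
      exact h3 ▸ h2
  -- f is integrable
  have hfInt : Integrable f μ := by
    refine Integrable.mono' (hgInt.add hhInt.abs) hfmeas.aestronglyMeasurable ?_
    filter_upwards [hupper, hlower] with x h1 h2
    rw [Real.norm_eq_abs, abs_le]
    simp only [Pi.add_apply]
    constructor
    · have : -(h x) ≤ |h x| := neg_le_abs _
      have := hg0 x
      linarith
    · have : h x ≤ |h x| := le_abs_self _
      linarith
  -- the Bochner integral bound
  have hintq : ∫ x, q x ∂μ = 1 := by
    rw [integral_eq_lintegral_of_nonneg_ae (Filter.Eventually.of_forall hq0)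
      hq.aestronglyMeasurable, hqint]
    simp [EReal.coe_nnreal_eq_coe_real]
  have hintp : ∫ x, p x ∂μ = 1 := by
    rw [integral_eq_lintegral_of_nonneg_ae (Filter.Eventually.of_forall hp0)
      hp.aestronglyMeasurable, hpint]
    simp
  have hinth : ∫ x, h x ∂μ = 0 := by
    rw [integral_sub hpInt hqInt, hintp, hintq, sub_self]
  have hintg : ∫ x, g x ∂μ ≤ a ^ 2 * B := by
    rw [integral_eq_lintegral_of_nonneg_ae (Filter.Eventually.of_forall hg0)
      hgmeas.aestronglyMeasurable]
    calc (∫⁻ x, ENNReal.ofReal (g x) ∂μ).toReal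
        ≤ (ENNReal.ofReal (a ^ 2 * B)).toReal :=
          ENNReal.toReal_mono ENNReal.ofReal_ne_top hglint
      _ = a ^ 2 * B := ENNReal.toReal_ofReal (by positivity)
  have hintf : ∫ x, f x ∂μ ≤ a ^ 2 * B := by
    calc ∫ x, f x ∂μ ≤ ∫ x, (g x + h x) ∂μ :=
          integral_mono_ae hfInt (hgInt.add hhInt) hupper
      _ = ∫ x, g x ∂μ + ∫ x, h x ∂μ := integral_add hgInt hhInt
      _ = ∫ x, g x ∂μ := by rw [hinth, add_zero]
      _ ≤ a ^ 2 * B := hintg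
  -- rewrite eIntegral as the Bochner integral
  have hpos_ne : ∫⁻ x, ENNReal.ofReal (f x) ∂μ ≠ ⊤ :=
    ne_of_lt (lt_of_le_of_lt (lintegral_ofReal_le_lintegral_enorm f) hfInt.2)
  have hneg_ne : ∫⁻ x, ENNReal.ofReal (-f x) ∂μ ≠ ⊤ := by
    refine ne_of_lt (lt_of_le_of_lt ?_ hfInt.2)
    calc ∫⁻ x, ENNReal.ofReal (-f x) ∂μ ≤ ∫⁻ x, ‖-f x‖ₑ ∂μ :=
          lintegral_ofReal_le_lintegral_enorm (fun x => -f x)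
      _ = ∫⁻ x, ‖f x‖ₑ ∂μ := by simp [enorm_neg]
  have aux : ∀ c : ℝ≥0∞, c ≠ ⊤ → ((c : EReal)) = ((c.toReal : ℝ) : EReal) := by
    intro c hc
    lift c to NNReal using hc
    simp [EReal.coe_nnreal_eq_coe_real]
  have heq : eIntegral μ f = ((∫ x, f x ∂μ : ℝ) : EReal) := by
    rw [eIntegral, integral_eq_lintegral_pos_part_sub_lintegral_neg_part hfInt]
    rw [aux _ hpos_ne, aux _ hneg_ne, ← EReal.coe_sub]
  rw [heq]
  have hfinal : a ^ 2 * B = C ^ 2 * B * ‖v - vt‖ ^ 2 := by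
    rw [ha_def]; ring
  exact_mod_cast hintf.trans (le_of_eq hfinal)
end

section
/- Let Σ be a real symmetric positive definite d×d matrix and let λ_min and λ_max be the smallest and largest eigenvalues of Σ⁻¹. Let u, ũ, v, ṽ ∈ ℝ^d and c, c̃ ≥ 0 satisfy ‖v − u‖ ≤ c and ‖ṽ − ũ‖ ≤ c̃. If (1/2)·(u − ũ)ᵀ Σ⁻¹ (u − ũ) ≤ ε for some ε ≥ 0, then (1/2)·(v − ṽ)ᵀ Σ⁻¹ (v − ṽ) ≤ (3λ_max/2)·( c² + c̃² + 2ε/λ_min ). -/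
open Matrix

/-- Quadratic form `yᵀ A y` of a matrix `A` on a Euclidean vector `y`. -/
def quadForm {d : ℕ} (A : Matrix (Fin d) (Fin d) ℝ) (y : EuclideanSpace ℝ (Fin d)) : ℝ :=
  (fun i => y i) ⬝ᵥ A.mulVec (fun i => y i)

lemma quadForm_eq_sum {d : ℕ} (A : Matrix (Fin d) (Fin d) ℝ) (hA : A.IsHermitian)
    (y : EuclideanSpace ℝ (Fin d)) :
    quadForm A y = ∑ i, hA.eigenvalues i * (inner ℝ (hA.eigenvectorBasis i) y : ℝ) ^ 2 := by
  have hsym : (Matrix.toEuclideanLin A).IsSymmetric :=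
    (Matrix.isHermitian_iff_isSymmetric).1 hA
  have hquad : quadForm A y = inner ℝ y (Matrix.toEuclideanLin A y) := by
    simp [quadForm, Matrix.toEuclideanLin_apply, PiLp.inner_apply, dotProduct,
      RCLike.inner_apply, WithLp.equiv, mul_comm]
  rw [hquad, ← OrthonormalBasis.sum_inner_mul_inner (hA.eigenvectorBasis)]
  congr 1; ext i
  have hev : Matrix.toEuclideanLin A (hA.eigenvectorBasis i)
      = hA.eigenvalues i • (hA.eigenvectorBasis i) := by
    apply (WithLp.equiv 2 _).injective
    simp [Matrix.ofLp_toEuclideanLin_apply]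
    have := hA.mulVec_eigenvectorBasis i
    simpa [Matrix.toLin'_apply] using this
  have : (inner ℝ (hA.eigenvectorBasis i) (Matrix.toEuclideanLin A y) : ℝ)
      = hA.eigenvalues i * inner ℝ (hA.eigenvectorBasis i) y := by
    rw [← hsym (hA.eigenvectorBasis i) y, hev]
    simp [inner_smul_left, mul_comm]
  rw [this, real_inner_comm y]; ring

lemma quadForm_le {d : ℕ} (A : Matrix (Fin d) (Fin d) ℝ) (hA : A.IsHermitian)
    (y : EuclideanSpace ℝ (Fin d)) (M : ℝ) (hM : ∀ i, hA.eigenvalues i ≤ M) (hM0 : 0 ≤ M) :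
    quadForm A y ≤ M * ‖y‖ ^ 2 := by
  rw [quadForm_eq_sum A hA y]
  have hnorm : ‖y‖ ^ 2 = ∑ i, (inner ℝ (hA.eigenvectorBasis i) y : ℝ) ^ 2 := by
    have := OrthonormalBasis.sum_inner_mul_inner (hA.eigenvectorBasis) y y
    rw [← real_inner_self_eq_norm_sq, ← this]
    congr 1; ext i; rw [real_inner_comm y]; ring
  rw [hnorm, Finset.mul_sum]
  exact Finset.sum_le_sum fun i _ => by
    have := sq_nonneg (inner ℝ (hA.eigenvectorBasis i) y : ℝ)
    nlinarith [hM i]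

lemma le_quadForm {d : ℕ} (A : Matrix (Fin d) (Fin d) ℝ) (hA : A.IsHermitian)
    (y : EuclideanSpace ℝ (Fin d)) (m : ℝ) (hm : ∀ i, m ≤ hA.eigenvalues i) :
    m * ‖y‖ ^ 2 ≤ quadForm A y := by
  rw [quadForm_eq_sum A hA y]
  have hnorm : ‖y‖ ^ 2 = ∑ i, (inner ℝ (hA.eigenvectorBasis i) y : ℝ) ^ 2 := by
    have := OrthonormalBasis.sum_inner_mul_inner (hA.eigenvectorBasis) y y
    rw [← real_inner_self_eq_norm_sq, ← this]
    congr 1; ext i; rw [real_inner_comm y]; ring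
  rw [hnorm, Finset.mul_sum]
  exact Finset.sum_le_sum fun i _ => by
    have := sq_nonneg (inner ℝ (hA.eigenvectorBasis i) y : ℝ)
    nlinarith [hm i]


/-- **Corollary 3.4 (precise form).** Let `Σ` be symmetric positive definite with
`λ_min, λ_max` the smallest and largest eigenvalues of `Σ⁻¹`. If `‖v - u‖ ≤ c`,
`‖ṽ - ũ‖ ≤ c̃` and the AP3 bound `(1/2)(u - ũ)ᵀ Σ⁻¹ (u - ũ) ≤ ε` holds at layer
`l`, then the AP3 bound
`(1/2)(v - ṽ)ᵀ Σ⁻¹ (v - ṽ) ≤ (3 λ_max / 2)(c² + c̃² + 2ε/λ_min)`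
holds at layer `l+1`. -/
theorem AP3_next_layer {d : ℕ}
    (Sig : Matrix (Fin d) (Fin d) ℝ) (hSig : Sig.PosDef)
    (lammin lammax : ℝ)
    (hlammin : lammin = ⨅ i, hSig.inv.1.eigenvalues i)
    (hlammax : lammax = ⨆ i, hSig.inv.1.eigenvalues i)
    (u ut v vt : EuclideanSpace ℝ (Fin d))
    (c ct : ℝ) (hc : 0 ≤ c) (hct : 0 ≤ ct)
    (hvu : ‖v - u‖ ≤ c) (hvtut : ‖vt - ut‖ ≤ ct)
    (ε : ℝ) (hε : 0 ≤ ε)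
    (hKL : (1 / 2 : ℝ) * quadForm Sig⁻¹ (u - ut) ≤ ε) :
    (1 / 2 : ℝ) * quadForm Sig⁻¹ (v - vt) ≤
      (3 * lammax / 2) * (c ^ 2 + ct ^ 2 + 2 * ε / lammin) := by
  rcases Nat.eq_zero_or_pos d with hd | hd
  · subst hd
    have h0 : quadForm Sig⁻¹ (v - vt) = 0 := by
      simp [quadForm, dotProduct]
    have hmin0 : lammin = 0 := by
      rw [hlammin]; exact Real.iInf_of_isEmpty _
    have hmax0 : lammax = 0 := by
      rw [hlammax]; exact Real.iSup_of_isEmpty _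
    rw [hmin0, hmax0, h0]
    norm_num
  haveI : Nonempty (Fin d) := ⟨⟨0, hd⟩⟩
  set hA := hSig.inv.1 with hAdef
  have hmin_le : ∀ i, lammin ≤ hA.eigenvalues i := fun i => by
    rw [hlammin]; exact ciInf_le (Finite.bddBelow_range _) i
  have hle_max : ∀ i, hA.eigenvalues i ≤ lammax := fun i => by
    rw [hlammax]; exact le_ciSup (Finite.bddAbove_range _) i
  have hminpos : 0 < lammin := by
    rw [hlammin]
    obtain ⟨i₀, hi₀⟩ := Finite.exists_min hA.eigenvalues
    exact lt_of_lt_of_le (hSig.inv.eigenvalues_pos i₀) (le_ciInf hi₀)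
  have hmaxpos : 0 < lammax := lt_of_lt_of_le hminpos (le_trans (hmin_le (Classical.arbitrary _)) (hle_max _))
  -- bound on ‖u - ut‖²
  have h1 : lammin * ‖u - ut‖ ^ 2 ≤ 2 * ε := by
    have := le_quadForm Sig⁻¹ hA (u - ut) lammin hmin_le
    linarith
  have h2 : ‖u - ut‖ ^ 2 ≤ 2 * ε / lammin := by
    rw [le_div_iff₀ hminpos]; linarith
  -- triangle inequality
  have htri : ‖v - vt‖ ≤ ‖v - u‖ + ‖u - ut‖ + ‖vt - ut‖ := by
    have : v - vt = (v - u) + (u - ut) + (ut - vt) := by abel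
    rw [this]
    calc ‖(v - u) + (u - ut) + (ut - vt)‖ ≤ ‖(v - u) + (u - ut)‖ + ‖ut - vt‖ := norm_add_le _ _
      _ ≤ ‖v - u‖ + ‖u - ut‖ + ‖ut - vt‖ := by linarith [norm_add_le (v - u) (u - ut)]
      _ = ‖v - u‖ + ‖u - ut‖ + ‖vt - ut‖ := by rw [norm_sub_rev ut vt]
  have hsq : ‖v - vt‖ ^ 2 ≤ 3 * (c ^ 2 + ct ^ 2 + 2 * ε / lammin) := by
    have h3 : ‖v - vt‖ ^ 2 ≤ (‖v - u‖ + ‖u - ut‖ + ‖vt - ut‖) ^ 2 := by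
      exact pow_le_pow_left₀ (norm_nonneg _) htri 2
    have h4 : (‖v - u‖ + ‖u - ut‖ + ‖vt - ut‖) ^ 2
        ≤ 3 * (‖v - u‖ ^ 2 + ‖u - ut‖ ^ 2 + ‖vt - ut‖ ^ 2) := by
      nlinarith [sq_nonneg (‖v - u‖ - ‖u - ut‖), sq_nonneg (‖v - u‖ - ‖vt - ut‖),
        sq_nonneg (‖u - ut‖ - ‖vt - ut‖)]
    have h5 : ‖v - u‖ ^ 2 ≤ c ^ 2 := by nlinarith [norm_nonneg (v - u)]
    have h6 : ‖vt - ut‖ ^ 2 ≤ ct ^ 2 := by nlinarith [norm_nonneg (vt - ut)]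
    linarith
  have hq := quadForm_le Sig⁻¹ hA (v - vt) lammax hle_max hmaxpos.le
  have : quadForm Sig⁻¹ (v - vt) ≤ lammax * (3 * (c ^ 2 + ct ^ 2 + 2 * ε / lammin)) :=
    le_trans hq (by nlinarith)
  linarith
end
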